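/- arXiv:1903.04358 — 2 statements merged into one kernel-verified Lean document; each statement's English description precedes it below -/
import Mathlib

section
/- Let Ω ⊂ X be open and let U_1, …, U_n ⊂ Ω be pairwise disjoint 1-quasiopen sets. For each j = 1, …, n, let η_j ∈ N^{1,1}_0(U_j) with 0 ≤ η_j ≤ 1 on X, with η_j = 0 in a 1-quasiopen set containing X∖U_j, and suppose there is a 1-quasiopen set V_j ⊂ {η_j = 1}. Let U_0 be another 1-quasiopen set with U_0 ∪ V_1 ∪ … ∪ V_n = Ω, let η := Σ_{j=1}^n η_j, and suppose v ∈ N^{1,1}(U_0) and ρ_j ∈ N^{1,1}(U_j) for each j = 1, …, n. Then the function w := Σ_{j=1}^n η_j ρ_j + (1−η)v has the function g := Σ_{j=1}^n η_j g_{ρ_j} + (1−η)g_v + Σ_{j=1}^n g_{η_j}|ρ_j − v| as a 1-weak upper gradient in Ω, where each g_{ρ_j} is the minimal 1-weak upper gradient of ρ_j in U_j, g_v is the minimal 1-weak upper gradient of v in U_0, and each g_{η_j} is the minimal 1-weak upper gradient of η_j (which vanishes outside U_j ∩ U_0, so g is well defined on all of Ω). -/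
open MeasureTheory Metric Filter
open scoped ENNReal NNReal Topology

noncomputable section

namespace Lahti

variable {X : Type*} [MetricSpace X] [MeasurableSpace X]

/-- A curve: a rectifiable continuous map from `[0, len]` to `X`,
parametrized by arc length (hence `1`-Lipschitz on `[0, len]`). -/
structure Curve (X : Type*) [MetricSpace X] where
  len : ℝ
  len_nonneg : 0 ≤ len
  toFun : ℝ → X
  lipschitz : LipschitzOnWith 1 toFun (Set.Icc 0 len)

/-- The curve `γ` lies in the set `A`. -/
def Curve.In (γ : Curve X) (A : Set X) : Prop :=
  ∀ t ∈ Set.Icc (0:ℝ) γ.len, γ.toFun t ∈ A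

/-- The curve integral `∫_γ g ds` for a curve parametrized by arc length. -/
def curveIntegral (g : X → ℝ≥0∞) (γ : Curve X) : ℝ≥0∞ :=
  ∫⁻ t in Set.Icc (0:ℝ) γ.len, g (γ.toFun t)

/-- The upper gradient inequality for the pair `(u, g)` on the curve `γ`. -/
def ugIneq (u : X → ℝ) (g : X → ℝ≥0∞) (γ : Curve X) : Prop :=
  ENNReal.ofReal |u (γ.toFun 0) - u (γ.toFun γ.len)| ≤ curveIntegral g γ

/-- `g` is an upper gradient of `u` on `X`. -/
def IsUpperGradient (u : X → ℝ) (g : X → ℝ≥0∞) : Prop :=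
  Measurable g ∧ ∀ γ : Curve X, ugIneq u g γ

/-- The 1-modulus of a family of curves. -/
def Mod1 (μ : Measure X) (Γ : Set (Curve X)) : ℝ≥0∞ :=
  ⨅ (ρ : X → ℝ≥0∞) (_ : Measurable ρ ∧ ∀ γ ∈ Γ, 1 ≤ curveIntegral ρ γ),
    ∫⁻ x, ρ x ∂μ

/-- `g` is a 1-weak upper gradient of `u` in `A`: the upper gradient inequality
holds on 1-a.e. curve in `A`. -/
def IsWUG (μ : Measure X) (u : X → ℝ) (g : X → ℝ≥0∞) (A : Set X) : Prop :=
  Measurable g ∧ Mod1 μ {γ : Curve X | γ.In A ∧ ¬ ugIneq u g γ} = 0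

/-- `g` is locally integrable on `A` (in the sense `L¹_loc(A)` of the paper). -/
def LocIntOn (μ : Measure X) (g : X → ℝ≥0∞) (A : Set X) : Prop :=
  ∀ x ∈ A, ∃ r > 0, ∫⁻ y in A ∩ ball x r, g y ∂μ < ∞

/-- `g` is the minimal 1-weak upper gradient of `u` in `A`. -/
def IsMinWUG (μ : Measure X) (u : X → ℝ) (g : X → ℝ≥0∞) (A : Set X) : Prop :=
  IsWUG μ u g A ∧ ∀ g' : X → ℝ≥0∞, IsWUG μ u g' A → LocIntOn μ g' A →
    ∀ᵐ x ∂(μ.restrict A), g x ≤ g' x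

/-- `∫_A g_u dμ`, where `g_u` is the minimal 1-weak upper gradient of `u` in `A`:
equivalently, the infimum of `∫_A g dμ` over all 1-weak upper gradients `g` of `u` in `A`. -/
def eD1 (μ : Measure X) (u : X → ℝ) (A : Set X) : ℝ≥0∞ :=
  ⨅ (g : X → ℝ≥0∞) (_ : IsWUG μ u g A), ∫⁻ x in A, g x ∂μ

/-- The `L¹(A)` (semi)norm. -/
def eL1 (μ : Measure X) (u : X → ℝ) (A : Set X) : ℝ≥0∞ :=
  ∫⁻ x in A, ENNReal.ofReal |u x| ∂μ

/-- The Newtonian `N^{1,1}(A)` (semi)norm. -/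
def eN11 (μ : Measure X) (u : X → ℝ) (A : Set X) : ℝ≥0∞ :=
  eL1 μ u A + eD1 μ u A

/-- `u ∈ N^{1,1}(A)`. -/
def MemN11 (μ : Measure X) (u : X → ℝ) (A : Set X) : Prop :=
  Measurable u ∧ eN11 μ u A < ∞

/-- `u ∈ N^{1,1}_0(D, A)`: Newtonian functions with zero boundary values. -/
def MemN11Zero (μ : Measure X) (u : X → ℝ) (D A : Set X) : Prop :=
  MemN11 μ u A ∧ ∀ x ∈ A \ D, u x = 0

/-- `u ∈ D^1(A)`: the Dirichlet space. -/
def MemD1 (μ : Measure X) (u : X → ℝ) (A : Set X) : Prop :=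
  Measurable u ∧ eD1 μ u A < ∞

/-- `u ∈ D^1_0(D, A)`: Dirichlet functions with zero boundary values. -/
def MemD1Zero (μ : Measure X) (u : X → ℝ) (D A : Set X) : Prop :=
  MemD1 μ u A ∧ ∀ x ∈ A \ D, u x = 0

/-- The `1`-capacity `capa_1(A)`. -/
def capa1 (μ : Measure X) (A : Set X) : ℝ≥0∞ :=
  ⨅ (u : X → ℝ) (_ : MemN11 μ u Set.univ ∧ ∀ x ∈ A, 1 ≤ u x),
    eN11 μ u Set.univ

/-- The variational 1-capacity `rcapa_1(A, D)`. -/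
def rcapa1 (μ : Measure X) (A D : Set X) : ℝ≥0∞ :=
  ⨅ (u : X → ℝ) (_ : MemN11Zero μ u D Set.univ ∧ ∀ x ∈ A, 1 ≤ u x),
    eD1 μ u Set.univ

/-- The variational 1-capacity `rcapa_1(A, D, U)` relative to an ambient set `U`. -/
def rcapa1Rel (μ : Measure X) (A D U : Set X) : ℝ≥0∞ :=
  ⨅ (u : X → ℝ) (_ : MemN11Zero μ u D U ∧ ∀ x ∈ A ∩ U, u x = 1),
    eD1 μ u U

/-- `U` is 1-quasiopen. -/
def QuasiOpen (μ : Measure X) (U : Set X) : Prop :=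
  ∀ ε : ℝ≥0∞, 0 < ε → ∃ G : Set X, IsOpen G ∧ capa1 μ G < ε ∧ IsOpen (U ∪ G)

/-- `A` is 1-thin at `x`. -/
def OneThin (μ : Measure X) (A : Set X) (x : X) : Prop :=
  Filter.Tendsto
    (fun r : ℝ =>
      ENNReal.ofReal r * rcapa1 μ (A ∩ ball x r) (ball x (2*r)) / μ (ball x r))
    (nhdsWithin (0:ℝ) (Set.Ioi 0)) (nhds 0)

/-- `U` is 1-finely open. -/
def FinelyOpen (μ : Measure X) (U : Set X) : Prop :=
  ∀ x ∈ U, OneThin μ Uᶜ x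

/-- The 1-fine interior of `A`. -/
def fineInt (μ : Measure X) (A : Set X) : Set X :=
  ⋃₀ {U : Set X | FinelyOpen μ U ∧ U ⊆ A}

/-- The 1-fine closure of `A`. -/
def fineCl (μ : Measure X) (A : Set X) : Set X :=
  ⋂₀ {F : Set X | FinelyOpen μ Fᶜ ∧ A ⊆ F}

/-- The restricted Hausdorff content of codimension one. -/
def hContent (μ : Measure X) (R : ℝ) (A : Set X) : ℝ≥0∞ :=
  ⨅ (c : ℕ → X) (r : ℕ → ℝ)
    (_ : (∀ j, 0 ≤ r j ∧ r j ≤ R) ∧ A ⊆ ⋃ j, ball (c j) (r j)),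
    ∑' j, μ (ball (c j) (r j)) / ENNReal.ofReal (r j)

/-- The codimension-one Hausdorff measure `ℋ`. -/
def codimH (μ : Measure X) (A : Set X) : ℝ≥0∞ :=
  ⨆ (R : ℝ) (_ : 0 < R), hContent μ R A

/-- The measure-theoretic interior `I_E`. -/
def mInt (μ : Measure X) (E : Set X) : Set X :=
  {x : X | Filter.Tendsto (fun r : ℝ => μ (ball x r \ E) / μ (ball x r))
    (nhdsWithin (0:ℝ) (Set.Ioi 0)) (nhds 0)}

/-- The measure-theoretic exterior `O_E`. -/
def mExt (μ : Measure X) (E : Set X) : Set X :=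
  {x : X | Filter.Tendsto (fun r : ℝ => μ (ball x r ∩ E) / μ (ball x r))
    (nhdsWithin (0:ℝ) (Set.Ioi 0)) (nhds 0)}

/-- The measure-theoretic boundary `∂*E`. -/
def mBdry (μ : Measure X) (E : Set X) : Set X :=
  (mInt μ E ∪ mExt μ E)ᶜ

/-- `u ∈ N^{1,1}_loc(A)`. -/
def MemN11loc (μ : Measure X) (u : X → ℝ) (A : Set X) : Prop :=
  Measurable u ∧ ∀ x ∈ A, ∃ r > 0, eN11 μ u (A ∩ ball x r) < ∞

/-- `s i → u` in `L¹_loc(A)`. -/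
def TendstoL1loc (μ : Measure X) (s : ℕ → X → ℝ) (u : X → ℝ) (A : Set X) : Prop :=
  ∀ x ∈ A, ∃ r > 0,
    Filter.Tendsto (fun i => ∫⁻ y in A ∩ ball x r, ENNReal.ofReal |s i y - u y| ∂μ)
      Filter.atTop (nhds 0)

/-- The total variation `‖Du‖(Ω)` (for `Ω` open). -/
def totVar (μ : Measure X) (u : X → ℝ) (Ω : Set X) : ℝ≥0∞ :=
  ⨅ (s : ℕ → X → ℝ)
    (_ : (∀ i, MemN11loc μ (s i) Ω) ∧ TendstoL1loc μ s u Ω),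
    Filter.atTop.liminf (fun i => eD1 μ (s i) Ω)

/-- `‖Du‖(A)` for an arbitrary set `A`: infimum over open supersets. -/
def totVarSet (μ : Measure X) (u : X → ℝ) (A : Set X) : ℝ≥0∞ :=
  ⨅ (W : Set X) (_ : IsOpen W ∧ A ⊆ W), totVar μ u W

/-- `‖Du‖(A)` for `A ⊆ Ω`: the value on `A` of the variation measure on `Ω`. -/
def totVarOn (μ : Measure X) (u : X → ℝ) (A Ω : Set X) : ℝ≥0∞ :=
  ⨅ (W : Set X) (_ : IsOpen W ∧ A ⊆ W ∧ W ⊆ Ω), totVar μ u W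

/-- The perimeter `P(E, Ω)`. -/
def perim (μ : Measure X) (E : Set X) (Ω : Set X) : ℝ≥0∞ :=
  totVar μ (Set.indicator E fun _ => (1:ℝ)) Ω

/-- `u ∈ BV(Ω)`. -/
def MemBV (μ : Measure X) (u : X → ℝ) (Ω : Set X) : Prop :=
  AEMeasurable u (μ.restrict Ω) ∧ eL1 μ u Ω < ∞ ∧ totVar μ u Ω < ∞

/-- The upper approximate limit `u^∨(x)`. -/
def uVee (μ : Measure X) (u : X → ℝ) (x : X) : EReal :=
  sInf ((fun t : ℝ => (t : EReal)) ''
    {t : ℝ | Filter.Tendsto (fun r : ℝ => μ (ball x r ∩ {y | t < u y}) / μ (ball x r))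
      (nhdsWithin (0:ℝ) (Set.Ioi 0)) (nhds 0)})

/-- The lower approximate limit `u^∧(x)`. -/
def uWedge (μ : Measure X) (u : X → ℝ) (x : X) : EReal :=
  sSup ((fun t : ℝ => (t : EReal)) ''
    {t : ℝ | Filter.Tendsto (fun r : ℝ => μ (ball x r ∩ {y | u y < t}) / μ (ball x r))
      (nhdsWithin (0:ℝ) (Set.Ioi 0)) (nhds 0)})

/-- The jump set `S_u` (as a subset of `Ω`). -/
def jumpSet (μ : Measure X) (u : X → ℝ) (Ω : Set X) : Set X :=
  {x ∈ Ω | uWedge μ u x < uVee μ u x}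

/-- The variational BV-capacity `rcapa_BV(A, D, U)`. -/
def rcapaBV (μ : Measure X) (A D U : Set X) : ℝ≥0∞ :=
  ⨅ (u : X → ℝ)
    (_ : AEMeasurable u (μ.restrict U) ∧ eL1 μ u U < ∞ ∧
      (∃ Ω', IsOpen Ω' ∧ U ⊆ Ω' ∧ totVar μ u Ω' < ∞) ∧
      codimH μ {x ∈ U \ D | ¬ (uWedge μ u x = (0:EReal) ∧ uVee μ u x = (0:EReal))} = 0 ∧
      codimH μ {x ∈ A ∩ U | ¬ ((1:EReal) ≤ uWedge μ u x)} = 0),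
    totVarSet μ u U

/-- The alternative variational BV-capacity `rcapa^∨_BV(A, D, U)`. -/
def rcapaBVvee (μ : Measure X) (A D U : Set X) : ℝ≥0∞ :=
  ⨅ (u : X → ℝ)
    (_ : AEMeasurable u (μ.restrict U) ∧ eL1 μ u U < ∞ ∧
      (∃ Ω', IsOpen Ω' ∧ U ⊆ Ω' ∧ totVar μ u Ω' < ∞) ∧
      codimH μ {x ∈ U \ D | ¬ (uWedge μ u x = (0:EReal) ∧ uVee μ u x = (0:EReal))} = 0 ∧
      codimH μ {x ∈ A ∩ U | ¬ ((1:EReal) ≤ uVee μ u x)} = 0),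
    totVarSet μ u U

/-- `μ` is doubling with constant `Cd`. -/
def Doubling (μ : Measure X) (Cd : ℝ) : Prop :=
  ∀ (x : X) (r : ℝ), 0 < r →
    0 < μ (ball x r) ∧ μ (ball x (2*r)) ≤ ENNReal.ofReal Cd * μ (ball x r) ∧
      μ (ball x r) < ∞

/-- `X` supports a `(1,1)`-Poincaré inequality with constants `CP` and `lam`. -/
def PoincareInequality (μ : Measure X) (CP lam : ℝ) : Prop :=
  ∀ (x : X) (r : ℝ), 0 < r → ∀ (u : X → ℝ) (g : X → ℝ≥0∞),
    MeasureTheory.LocallyIntegrable u μ → IsUpperGradient u g →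
    (∫⁻ y in ball x r, ENNReal.ofReal |u y - ⨍ z in ball x r, u z ∂μ| ∂μ) / μ (ball x r)
      ≤ ENNReal.ofReal (CP * r) *
        ((∫⁻ y in ball x (lam * r), g y ∂μ) / μ (ball x (lam * r)))

section AuxMod

variable {X : Type*} [MetricSpace X] [MeasurableSpace X]

lemma curve_aemeasurable [BorelSpace X] (γ : Curve X) :
    AEMeasurable γ.toFun (volume.restrict (Set.Icc 0 γ.len)) :=
  γ.lipschitz.continuousOn.aemeasurable measurableSet_Icc

lemma comp_aemeasurable' [BorelSpace X] (γ : Curve X) {f : X → ℝ≥0∞} (hf : Measurable f) :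
    AEMeasurable (fun t => f (γ.toFun t)) (volume.restrict (Set.Icc 0 γ.len)) :=
  hf.comp_aemeasurable (curve_aemeasurable γ)

lemma mod1_eq_zero_of (μ : Measure X) (Γ : Set (Curve X))
    (h : ∀ ε : ℝ≥0∞, 0 < ε → ε ≠ ∞ → ∃ ρ : X → ℝ≥0∞, Measurable ρ ∧
      (∀ γ ∈ Γ, 1 ≤ curveIntegral ρ γ) ∧ ∫⁻ x, ρ x ∂μ ≤ ε) :
    Mod1 μ Γ = 0 := by
  have hle : ∀ ε : ℝ≥0∞, 0 < ε → ε ≠ ∞ → Mod1 μ Γ ≤ ε := by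
    intro ε hε hε'
    obtain ⟨ρ, hm, hadm, hint⟩ := h ε hε hε'
    exact le_trans (iInf_le_of_le ρ (iInf_le_of_le ⟨hm, hadm⟩ le_rfl)) hint
  by_contra hne
  have hpos : 0 < Mod1 μ Γ := pos_iff_ne_zero.mpr hne
  obtain ⟨c, hc0, hc⟩ := exists_between hpos
  exact absurd (hle c hc0 hc.ne_top) (not_le.mpr hc)

lemma exists_adm_of_mod1_eq_zero {μ : Measure X} {Γ : Set (Curve X)}
    (h : Mod1 μ Γ = 0) {ε : ℝ≥0∞} (hε : 0 < ε) :
    ∃ ρ : X → ℝ≥0∞, Measurable ρ ∧ (∀ γ ∈ Γ, 1 ≤ curveIntegral ρ γ) ∧ ∫⁻ x, ρ x ∂μ < ε := by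
  have : Mod1 μ Γ < ε := h ▸ hε
  rw [Mod1, iInf_lt_iff] at this
  obtain ⟨ρ, hρ⟩ := this
  rw [iInf_lt_iff] at hρ
  obtain ⟨⟨hm, hadm⟩, hint⟩ := hρ
  exact ⟨ρ, hm, hadm, hint⟩

lemma mod1_null_subset {μ : Measure X} {Γ Γ' : Set (Curve X)} (hsub : Γ ⊆ Γ')
    (h : Mod1 μ Γ' = 0) : Mod1 μ Γ = 0 := by
  apply mod1_eq_zero_of
  intro ε hε _
  obtain ⟨ρ, hm, hadm, hint⟩ := exists_adm_of_mod1_eq_zero h hε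
  exact ⟨ρ, hm, fun γ hγ => hadm γ (hsub hγ), hint.le⟩

lemma mod1_null_iUnion {μ : Measure X} (Γ : ℕ → Set (Curve X))
    (h : ∀ i, Mod1 μ (Γ i) = 0) : Mod1 μ (⋃ i, Γ i) = 0 := by
  apply mod1_eq_zero_of
  intro ε hε hε'
  have hεi : ∀ i : ℕ, (0:ℝ≥0∞) < ε / 2 * (2⁻¹:ℝ≥0∞) ^ i := by
    intro i
    apply ENNReal.mul_pos
    · exact (ENNReal.div_pos hε.ne' (by norm_num)).ne'
    · exact (ENNReal.pow_pos (by norm_num) i).ne'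
  choose ρ hm hadm hint using fun i => exists_adm_of_mod1_eq_zero (h i) (hεi i)
  refine ⟨fun x => ∑' i, ρ i x, Measurable.ennreal_tsum hm, ?_, ?_⟩
  · intro γ hγ
    obtain ⟨_, ⟨i, rfl⟩, hγi⟩ := hγ
    refine le_trans (hadm i γ hγi) ?_
    exact lintegral_mono fun t => ENNReal.le_tsum i
  · rw [lintegral_tsum fun i => (hm i).aemeasurable]
    calc ∑' i, ∫⁻ x, ρ i x ∂μ ≤ ∑' i, ε / 2 * (2⁻¹:ℝ≥0∞) ^ i :=
          ENNReal.tsum_le_tsum fun i => (hint i).le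
      _ = ε / 2 * ∑' i, (2⁻¹:ℝ≥0∞) ^ i := by rw [ENNReal.tsum_mul_left]
      _ = ε / 2 * 2 := by rw [ENNReal.tsum_geometric]; norm_num
      _ ≤ ε := by
          rw [ENNReal.div_mul_cancel (by norm_num) (by norm_num)]

lemma mod1_null_union {μ : Measure X} {Γ₁ Γ₂ : Set (Curve X)}
    (h1 : Mod1 μ Γ₁ = 0) (h2 : Mod1 μ Γ₂ = 0) : Mod1 μ (Γ₁ ∪ Γ₂) = 0 := by
  have : Γ₁ ∪ Γ₂ ⊆ ⋃ i : ℕ, (if i = 0 then Γ₁ else Γ₂) := by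
    intro γ hγ
    rcases hγ with hγ | hγ
    · exact Set.mem_iUnion.mpr ⟨0, by simpa using hγ⟩
    · exact Set.mem_iUnion.mpr ⟨1, by simpa using hγ⟩
  refine mod1_null_subset this (mod1_null_iUnion _ ?_)
  intro i
  by_cases hi : i = 0 <;> simp [hi, h1, h2]

lemma mod1_null_iUnion_fin {μ : Measure X} {n : ℕ} (Γ : Fin n → Set (Curve X))
    (h : ∀ j, Mod1 μ (Γ j) = 0) : Mod1 μ (⋃ j, Γ j) = 0 := by
  have hsub : (⋃ j, Γ j) ⊆ ⋃ i : ℕ, (if hi : i < n then Γ ⟨i, hi⟩ else ∅) := by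
    intro γ hγ
    obtain ⟨_, ⟨j, rfl⟩, hγj⟩ := hγ
    exact Set.mem_iUnion.mpr ⟨j.1, by simp [j.2, hγj]⟩
  refine mod1_null_subset hsub (mod1_null_iUnion _ ?_)
  intro i
  by_cases hi : i < n
  · simpa [hi] using h ⟨i, hi⟩
  · simp only [hi, dif_neg, not_false_iff]
    apply mod1_eq_zero_of
    intro ε hε _
    exact ⟨0, measurable_const, fun γ hγ => absurd hγ (Set.notMem_empty γ), by simp⟩

lemma mod1_null_of_infinite_integral (μ : Measure X) {f : X → ℝ≥0∞} (hf : Measurable f)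
    (hfi : ∫⁻ x, f x ∂μ ≠ ∞) (Γ : Set (Curve X))
    (hΓ : ∀ γ ∈ Γ, curveIntegral f γ = ∞) : Mod1 μ Γ = 0 := by
  apply mod1_eq_zero_of
  intro ε hε hε'
  set c : ℝ≥0∞ := ε / (∫⁻ x, f x ∂μ + 1) with hc
  have hc0 : c ≠ 0 := by
    apply ENNReal.div_ne_zero.mpr
    exact ⟨hε.ne', by simp [hfi, ENNReal.add_ne_top]⟩
  have hctop : c ≠ ∞ := (ENNReal.div_lt_top hε' (by simp)).ne
  refine ⟨fun x => c * f x, hf.const_mul c, ?_, ?_⟩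
  · intro γ hγ
    have : curveIntegral (fun x => c * f x) γ = c * curveIntegral f γ := by
      unfold curveIntegral
      exact lintegral_const_mul' c _ hctop
    rw [this, hΓ γ hγ, ENNReal.mul_top hc0]
    exact le_top
  · rw [lintegral_const_mul' c _ hctop]
    calc c * ∫⁻ x, f x ∂μ ≤ c * (∫⁻ x, f x ∂μ + 1) := by
          exact mul_le_mul_right (le_add_of_nonneg_right zero_le_one) c
      _ ≤ ε := by
          rw [hc, ENNReal.div_mul_cancel (by simp) (by simp [hfi, ENNReal.add_ne_top])]

end AuxMod

section AuxSub

variable {X : Type*} [MetricSpace X] [MeasurableSpace X]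

/-- The subcurve of `γ` from time `a` to time `b`. -/
def subCurve (γ : Curve X) (a b : ℝ) (h1 : 0 ≤ a) (h2 : a ≤ b) (h3 : b ≤ γ.len) :
    Curve X where
  len := b - a
  len_nonneg := by linarith
  toFun := fun t => γ.toFun (a + t)
  lipschitz := by
    intro s hs t ht
    simp only [Set.mem_Icc] at hs ht
    have h1s : a + s ∈ Set.Icc (0:ℝ) γ.len := by
      constructor <;> [linarith [hs.1]; linarith [hs.2]]
    have h1t : a + t ∈ Set.Icc (0:ℝ) γ.len := by
      constructor <;> [linarith [ht.1]; linarith [ht.2]]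
    have := γ.lipschitz h1s h1t
    calc edist (γ.toFun (a + s)) (γ.toFun (a + t)) ≤ 1 * edist (a + s) (a + t) := this
      _ = 1 * edist s t := by
          rw [edist_dist, edist_dist, dist_add_left]

lemma subCurve_integral (γ : Curve X) (a b : ℝ) (h1 : 0 ≤ a) (h2 : a ≤ b) (h3 : b ≤ γ.len)
    (f : X → ℝ≥0∞) :
    curveIntegral f (subCurve γ a b h1 h2 h3) = ∫⁻ u in Set.Icc a b, f (γ.toFun u) := by
  unfold curveIntegral subCurve
  simp only
  have hpre : (fun t => a + t) ⁻¹' (Set.Icc a b) = Set.Icc (0:ℝ) (b - a) := by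
    ext t; simp only [Set.mem_preimage, Set.mem_Icc]; constructor <;> intro h <;>
      constructor <;> linarith [h.1, h.2]
  rw [← hpre]
  exact (measurePreserving_add_left volume a).setLIntegral_comp_preimage_emb
    (measurableEmbedding_addLeft a) (fun u => f (γ.toFun u)) (Set.Icc a b)

/-- The upper gradient inequality for `(u, gu)` holds on all subcurves of `γ` lying in `A`. -/
def GoodSub (u : X → ℝ) (gu : X → ℝ≥0∞) (A : Set X) (γ : Curve X) : Prop :=
  ∀ a b, 0 ≤ a → a ≤ b → b ≤ γ.len → (∀ τ ∈ Set.Icc a b, γ.toFun τ ∈ A) →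
    ENNReal.ofReal |u (γ.toFun a) - u (γ.toFun b)| ≤ ∫⁻ r in Set.Icc a b, gu (γ.toFun r)

lemma mod1_null_not_goodSub {μ : Measure X} {u : X → ℝ} {gu : X → ℝ≥0∞} {A : Set X}
    (h : IsWUG μ u gu A) : Mod1 μ {γ : Curve X | ¬ GoodSub u gu A γ} = 0 := by
  apply mod1_eq_zero_of
  intro ε hε _
  obtain ⟨ρ, hm, hadm, hint⟩ := exists_adm_of_mod1_eq_zero h.2 hε
  refine ⟨ρ, hm, ?_, hint.le⟩
  intro γ hγ
  simp only [Set.mem_setOf_eq, GoodSub, not_forall] at hγ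
  obtain ⟨a, b, h1, h2, h3, hin, hfail⟩ := hγ
  set δ := subCurve γ a b h1 h2 h3 with hδ
  have hδin : δ.In A := by
    intro τ hτ
    simp only [Set.mem_Icc, hδ, subCurve] at hτ ⊢
    exact hin (a + τ) ⟨by linarith [hτ.1], by linarith [hτ.2]⟩
  have hδbad : ¬ ugIneq u gu δ := by
    intro hug
    apply hfail
    have h0 : δ.toFun 0 = γ.toFun a := by simp [hδ, subCurve]
    have hl : δ.toFun δ.len = γ.toFun b := by simp [hδ, subCurve]
    rw [ugIneq, h0, hl, subCurve_integral] at hug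
    exact hug
  have := hadm δ ⟨hδin, hδbad⟩
  refine le_trans this ?_
  rw [subCurve_integral]
  unfold curveIntegral
  apply lintegral_mono_set
  intro τ hτ
  simp only [Set.mem_Icc] at hτ ⊢
  exact ⟨by linarith [hτ.1], by linarith [hτ.2]⟩

end AuxSub

section AuxPair

variable {X : Type*} [MetricSpace X] [MeasurableSpace X]

lemma goodSub_pair {u : X → ℝ} {gu : X → ℝ≥0∞} {A : Set X} {γ : Curve X}
    (hg : GoodSub u gu A γ) {s t : ℝ} (hs : s ∈ Set.Icc (0:ℝ) γ.len)
    (ht : t ∈ Set.Icc (0:ℝ) γ.len)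
    (hin : ∀ τ ∈ Set.Icc (min s t) (max s t), γ.toFun τ ∈ A) :
    ENNReal.ofReal |u (γ.toFun s) - u (γ.toFun t)| ≤
      ∫⁻ r in Set.Icc (min s t) (max s t), gu (γ.toFun r) := by
  have h := hg (min s t) (max s t) (le_min hs.1 ht.1) min_le_max (max_le hs.2 ht.2) hin
  rcases le_total s t with hst | hst
  · rw [min_eq_left hst, max_eq_right hst]
    rw [min_eq_left hst, max_eq_right hst] at h
    exact h
  · rw [min_eq_right hst, max_eq_left hst]
    rw [min_eq_right hst, max_eq_left hst] at h
    rw [abs_sub_comm]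
    exact h

lemma goodSub_pair_real {u : X → ℝ} {gu : X → ℝ≥0∞} {A : Set X} {γ : Curve X}
    (hg : GoodSub u gu A γ) {s t : ℝ} (hs : s ∈ Set.Icc (0:ℝ) γ.len)
    (ht : t ∈ Set.Icc (0:ℝ) γ.len)
    (hin : ∀ τ ∈ Set.Icc (min s t) (max s t), γ.toFun τ ∈ A) {d : ℝ} (hd : 0 ≤ d)
    (hδ : ∫⁻ r in Set.Icc (min s t) (max s t), gu (γ.toFun r) ≤ ENNReal.ofReal d) :
    |u (γ.toFun s) - u (γ.toFun t)| ≤ d := by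
  have := (goodSub_pair hg hs ht hin).trans hδ
  exact (ENNReal.ofReal_le_ofReal_iff hd).mp this

lemma fin_min {n : ℕ} (f : Fin n → ℝ) (hf : ∀ k, 0 < f k) : ∃ d > 0, ∀ k, d ≤ f k := by
  induction n with
  | zero => exact ⟨1, one_pos, fun k => k.elim0⟩
  | succ m ih =>
    obtain ⟨d, hd, hdk⟩ := ih (fun k => f k.succ) (fun k => hf k.succ)
    refine ⟨min d (f 0), lt_min hd (hf 0), fun k => ?_⟩
    refine Fin.cases ?_ (fun i => ?_) k
    · exact min_le_right d (f 0)
    · exact le_trans (min_le_left _ _) (hdk i)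

end AuxPair

lemma abs_sub_le_of_between {s t r : ℝ} (h1 : min s t ≤ r) (h2 : r ≤ max s t) :
    |r - t| ≤ |s - t| := by
  have hs1 : s - t ≤ |s - t| := le_abs_self _
  have hs2 : t - s ≤ |s - t| := by rw [abs_sub_comm]; exact le_abs_self _
  rw [abs_sub_le_iff]
  rcases le_total s t with hle | hle
  · rw [min_eq_left hle] at h1
    rw [max_eq_right hle] at h2
    constructor <;> linarith
  · rw [min_eq_right hle] at h1
    rw [max_eq_left hle] at h2
    constructor <;> linarith

section AuxRelOpen

variable {X : Type*} [MetricSpace X] [MeasurableSpace X]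

/-- The preimage of `Y` along `γ` is relatively open in `[0, len]`. -/
def RelOpen (Y : Set X) (γ : Curve X) : Prop :=
  ∀ t ∈ Set.Icc (0:ℝ) γ.len, γ.toFun t ∈ Y →
    ∃ δ > 0, ∀ s ∈ Set.Icc (0:ℝ) γ.len, |s - t| < δ → γ.toFun s ∈ Y

lemma mod1_null_not_relOpen [BorelSpace X] {μ : Measure X} {Y : Set X} (hY : QuasiOpen μ Y) :
    Mod1 μ {γ : Curve X | ¬ RelOpen Y γ} = 0 := by
  -- choose open sets and capacity test functions
  have hGex : ∀ i : ℕ, ∃ G : Set X, IsOpen G ∧ capa1 μ G < (2⁻¹:ℝ≥0∞) ^ i ∧ IsOpen (Y ∪ G) :=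
    fun i => hY ((2⁻¹:ℝ≥0∞) ^ i) (ENNReal.pow_pos (by norm_num) i)
  choose G hGopen hGcapa hYGopen using hGex
  have huex : ∀ i : ℕ, ∃ u : X → ℝ, (MemN11 μ u Set.univ ∧ ∀ x ∈ G i, 1 ≤ u x) ∧
      eN11 μ u Set.univ < (2⁻¹:ℝ≥0∞) ^ i := by
    intro i
    have := hGcapa i
    rw [capa1, iInf_lt_iff] at this
    obtain ⟨u, hu⟩ := this
    rw [iInf_lt_iff] at hu
    obtain ⟨h1, h2⟩ := hu
    exact ⟨u, h1, h2⟩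
  choose u hu1 huN using huex
  have huL1 : ∀ i, eL1 μ (u i) Set.univ < (2⁻¹:ℝ≥0∞) ^ i :=
    fun i => lt_of_le_of_lt le_self_add (huN i)
  have hgex : ∀ i : ℕ, ∃ g : X → ℝ≥0∞, IsWUG μ (u i) g Set.univ ∧
      ∫⁻ x, g x ∂μ < (2⁻¹:ℝ≥0∞) ^ i := by
    intro i
    have hD : eD1 μ (u i) Set.univ < (2⁻¹:ℝ≥0∞) ^ i := lt_of_le_of_lt le_add_self (huN i)
    rw [eD1, iInf_lt_iff] at hD
    obtain ⟨g, hg⟩ := hD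
    rw [iInf_lt_iff] at hg
    obtain ⟨h1, h2⟩ := hg
    rw [setLIntegral_univ] at h2
    exact ⟨g, h1, h2⟩
  choose g hgwug hgint using hgex
  set Fsum : X → ℝ≥0∞ := fun y => ∑' i, ENNReal.ofReal |u i y| with hFsum
  set Gsum : X → ℝ≥0∞ := fun y => ∑' i, g i y with hGsum
  have hFmeas : Measurable Fsum :=
    Measurable.ennreal_tsum fun i => ((hu1 i).1.1).abs.ennreal_ofReal
  have hGmeas : Measurable Gsum := Measurable.ennreal_tsum fun i => (hgwug i).1
  have hgeom : (∑' i : ℕ, (2⁻¹:ℝ≥0∞) ^ i) = 2 := by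
    rw [ENNReal.tsum_geometric]; norm_num
  have hFint : ∫⁻ x, Fsum x ∂μ ≠ ∞ := by
    rw [hFsum]
    simp only
    rw [lintegral_tsum fun i => (((hu1 i).1.1).abs.ennreal_ofReal).aemeasurable]
    have : ∑' i, ∫⁻ x, ENNReal.ofReal |u i x| ∂μ ≤ 2 := by
      rw [← hgeom]
      refine ENNReal.tsum_le_tsum fun i => ?_
      have := (huL1 i).le
      rwa [eL1, setLIntegral_univ] at this
    exact (lt_of_le_of_lt this (by norm_num)).ne
  have hGint : ∫⁻ x, Gsum x ∂μ ≠ ∞ := by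
    rw [hGsum]
    simp only
    rw [lintegral_tsum fun i => ((hgwug i).1).aemeasurable]
    have : ∑' i, ∫⁻ x, g i x ∂μ ≤ 2 := by
      rw [← hgeom]
      exact ENNReal.tsum_le_tsum fun i => (hgint i).le
    exact (lt_of_le_of_lt this (by norm_num)).ne
  -- the exceptional families
  have hΓ1 : Mod1 μ {γ : Curve X | curveIntegral Gsum γ = ∞} = 0 :=
    mod1_null_of_infinite_integral μ hGmeas hGint _ (fun γ hγ => hγ)
  have hΓ2 : Mod1 μ {γ : Curve X | curveIntegral Fsum γ = ∞} = 0 :=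
    mod1_null_of_infinite_integral μ hFmeas hFint _ (fun γ hγ => hγ)
  have hΓ3 : ∀ i, Mod1 μ {γ : Curve X | ¬ GoodSub (u i) (g i) Set.univ γ} = 0 :=
    fun i => mod1_null_not_goodSub (hgwug i)
  apply mod1_null_subset (Γ' := {γ : Curve X | curveIntegral Gsum γ = ∞} ∪
    ({γ : Curve X | curveIntegral Fsum γ = ∞} ∪
      ⋃ i : ℕ, {γ : Curve X | ¬ GoodSub (u i) (g i) Set.univ γ}))
  swap
  · exact mod1_null_union hΓ1 (mod1_null_union hΓ2 (mod1_null_iUnion _ hΓ3))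
  intro γ hγbad
  by_contra hγ
  simp only [Set.mem_union, Set.mem_iUnion, Set.mem_setOf_eq, not_or, not_exists] at hγ
  obtain ⟨hγ1, hγ2, hγ3'⟩ := hγ
  have hγ3 : ∀ i, GoodSub (u i) (g i) Set.univ γ := fun i => not_not.mp (hγ3' i)
  -- γ is good; derive RelOpen, contradiction
  apply hγbad
  intro t ht htY
  -- length must be positive or trivial
  by_cases hlen : γ.len = 0
  · refine ⟨1, one_pos, fun s hs _ => ?_⟩
    have : s = t := by
      simp only [hlen, Set.Icc_self, Set.mem_singleton_iff] at hs ht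
      rw [hs, ht]
    rwa [this]
  have hlenpos : 0 < γ.len := lt_of_le_of_ne γ.len_nonneg (Ne.symm hlen)
  -- a point where Fsum is finite
  have hs0 : ∃ s₀ ∈ Set.Icc (0:ℝ) γ.len, Fsum (γ.toFun s₀) ≠ ∞ := by
    by_contra hcon
    push_neg at hcon
    apply hγ2
    have : (∞:ℝ≥0∞) * volume (Set.Icc (0:ℝ) γ.len) ≤ curveIntegral Fsum γ := by
      rw [← setLIntegral_const]
      exact setLIntegral_mono' measurableSet_Icc fun s hs => (hcon s hs).ge
    rw [Real.volume_Icc] at this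
    have hvol : ENNReal.ofReal (γ.len - 0) ≠ 0 := by
      simp only [sub_zero]
      exact (ENNReal.ofReal_pos.mpr hlenpos).ne'
    rw [ENNReal.top_mul hvol] at this
    exact top_le_iff.mp this
  obtain ⟨s₀, hs₀I, hs₀⟩ := hs0
  by_contra hnot
  push_neg at hnot
  -- for each i, find sᵢ with γ sᵢ ∈ G i
  have hsi : ∀ i : ℕ, ∃ sᵢ ∈ Set.Icc (0:ℝ) γ.len, γ.toFun sᵢ ∈ G i := by
    intro i
    have hcont : ContinuousWithinAt γ.toFun (Set.Icc 0 γ.len) t :=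
      γ.lipschitz.continuousOn t ht
    have hnb : Y ∪ G i ∈ 𝓝 (γ.toFun t) := (hYGopen i).mem_nhds (Set.mem_union_left _ htY)
    have hev := hcont hnb
    rw [Filter.mem_map, Metric.mem_nhdsWithin_iff] at hev
    obtain ⟨δ, hδpos, hδ⟩ := hev
    obtain ⟨s, hsI, hst, hsY⟩ := hnot δ hδpos
    have : γ.toFun s ∈ Y ∪ G i := by
      apply hδ
      exact ⟨by rw [Metric.mem_ball, Real.dist_eq]; exact hst, hsI⟩
    rcases this with h | h
    · exact absurd h hsY
    · exact ⟨s, hsI, h⟩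
  choose sᵢ hsiI hsiG using hsi
  -- the contradiction: N ≤ Fsum (γ s₀) + curveIntegral Gsum γ for all N
  have hkey : ∀ N : ℕ, (N:ℝ≥0∞) ≤ Fsum (γ.toFun s₀) + curveIntegral Gsum γ := by
    intro N
    have hi : ∀ i : ℕ, (1:ℝ≥0∞) ≤ ENNReal.ofReal |u i (γ.toFun s₀)| +
        ∫⁻ r in Set.Icc (0:ℝ) γ.len, g i (γ.toFun r) := by
      intro i
      set a := min s₀ (sᵢ i) with ha
      set b := max s₀ (sᵢ i) with hb
      have haI : 0 ≤ a := le_min hs₀I.1 (hsiI i).1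
      have hbI : b ≤ γ.len := max_le hs₀I.2 (hsiI i).2
      have hgs := hγ3 i a b haI (min_le_max) hbI (fun τ _ => Set.mem_univ _)
      have habs : |u i (γ.toFun a) - u i (γ.toFun b)| = |u i (γ.toFun (sᵢ i)) - u i (γ.toFun s₀)| := by
        rcases le_total s₀ (sᵢ i) with h | h
        · rw [ha, hb, min_eq_left h, max_eq_right h, abs_sub_comm]
        · rw [ha, hb, min_eq_right h, max_eq_left h]
      have h1u : (1:ℝ) ≤ u i (γ.toFun (sᵢ i)) := (hu1 i).2 _ (hsiG i)
      have htri : (1:ℝ) ≤ |u i (γ.toFun s₀)| + |u i (γ.toFun (sᵢ i)) - u i (γ.toFun s₀)| := by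
        have h1 := le_abs_self (u i (γ.toFun (sᵢ i)) - u i (γ.toFun s₀))
        have h2 := le_abs_self (u i (γ.toFun s₀))
        linarith
      calc (1:ℝ≥0∞) = ENNReal.ofReal 1 := by simp
        _ ≤ ENNReal.ofReal (|u i (γ.toFun s₀)| + |u i (γ.toFun (sᵢ i)) - u i (γ.toFun s₀)|) :=
            ENNReal.ofReal_le_ofReal htri
        _ ≤ ENNReal.ofReal |u i (γ.toFun s₀)| +
            ENNReal.ofReal |u i (γ.toFun (sᵢ i)) - u i (γ.toFun s₀)| := ENNReal.ofReal_add_le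
        _ ≤ ENNReal.ofReal |u i (γ.toFun s₀)| + ∫⁻ r in Set.Icc a b, g i (γ.toFun r) := by
            gcongr
            rw [← habs] at *
            exact le_trans (by rw [habs]) hgs
        _ ≤ ENNReal.ofReal |u i (γ.toFun s₀)| + ∫⁻ r in Set.Icc (0:ℝ) γ.len, g i (γ.toFun r) := by
            gcongr
    calc (N:ℝ≥0∞) = ∑ _i ∈ Finset.range N, (1:ℝ≥0∞) := by simp
      _ ≤ ∑ i ∈ Finset.range N, (ENNReal.ofReal |u i (γ.toFun s₀)| +
          ∫⁻ r in Set.Icc (0:ℝ) γ.len, g i (γ.toFun r)) := Finset.sum_le_sum fun i _ => hi i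
      _ = (∑ i ∈ Finset.range N, ENNReal.ofReal |u i (γ.toFun s₀)|) +
          ∑ i ∈ Finset.range N, ∫⁻ r in Set.Icc (0:ℝ) γ.len, g i (γ.toFun r) :=
            Finset.sum_add_distrib
      _ ≤ Fsum (γ.toFun s₀) + curveIntegral Gsum γ := by
          gcongr
          · exact ENNReal.sum_le_tsum _
          · rw [← lintegral_finset_sum' _ fun i _ => comp_aemeasurable' γ (hgwug i).1]
            unfold curveIntegral
            apply lintegral_mono
            intro r
            exact ENNReal.sum_le_tsum _
  have hC : Fsum (γ.toFun s₀) + curveIntegral Gsum γ ≠ ∞ := by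
    apply ENNReal.add_ne_top.mpr
    exact ⟨hs₀, hγ1⟩
  obtain ⟨N, hN⟩ := ENNReal.exists_nat_gt (lt_top_iff_ne_top.mpr hC).ne
  exact absurd (hkey N) (not_le.mpr hN)

end AuxRelOpen

section AuxChain

lemma lintegral_Icc_split {G : ℝ → ℝ≥0∞} {a b c : ℝ} (hab : a ≤ b) (hbc : b ≤ c) :
    (∫⁻ r in Set.Icc a b, G r) + ∫⁻ r in Set.Icc b c, G r = ∫⁻ r in Set.Icc a c, G r := by
  have h1 : ∫⁻ r in Set.Icc b c, G r = ∫⁻ r in Set.Ioc b c, G r := by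
    apply setLIntegral_congr
    exact (Ioc_ae_eq_Icc (μ := volume) (a := b) (b := c)).symm
  rw [h1, ← lintegral_union measurableSet_Ioc, Set.Icc_union_Ioc_eq_Icc hab hbc]
  rw [Set.disjoint_left]
  intro r hr hr'
  exact absurd hr.2 (not_le.mpr hr'.1)

/-- Chaining a local estimate along `[0, L]`. -/
lemma chaining {L : ℝ} (hL : 0 ≤ L) (φ : ℝ → ℝ) (G : ℝ → ℝ≥0∞)
    (hloc : ∀ t ∈ Set.Icc 0 L, ∃ δ > 0, ∀ s ∈ Set.Icc 0 L, |s - t| < δ →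
      ENNReal.ofReal |φ s - φ t| ≤ ∫⁻ r in Set.Icc (min s t) (max s t), G r) :
    ENNReal.ofReal |φ 0 - φ L| ≤ ∫⁻ r in Set.Icc 0 L, G r := by
  set S : Set ℝ := {t | t ∈ Set.Icc 0 L ∧
    ENNReal.ofReal |φ 0 - φ t| ≤ ∫⁻ r in Set.Icc 0 t, G r} with hS
  have h0S : (0:ℝ) ∈ S := by
    constructor
    · exact ⟨le_refl 0, hL⟩
    · simp
  have hSne : S.Nonempty := ⟨0, h0S⟩
  have hSbdd : BddAbove S := ⟨L, fun t ht => ht.1.2⟩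
  set c := sSup S with hc
  have hcI : c ∈ Set.Icc 0 L := by
    constructor
    · exact le_csSup hSbdd h0S
    · exact csSup_le hSne fun t ht => ht.1.2
  obtain ⟨δ, hδpos, hδ⟩ := hloc c hcI
  have hcS : c ∈ S := by
    obtain ⟨t', ht'S, ht'⟩ := exists_lt_of_lt_csSup hSne (by linarith : c - δ < c)
    have ht'c : t' ≤ c := le_csSup hSbdd ht'S
    have hdist : |t' - c| < δ := by rw [abs_sub_lt_iff]; constructor <;> linarith
    have hest := hδ t' ht'S.1 hdist
    rw [min_eq_left ht'c, max_eq_right ht'c] at hest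
    refine ⟨hcI, ?_⟩
    calc ENNReal.ofReal |φ 0 - φ c|
        ≤ ENNReal.ofReal (|φ 0 - φ t'| + |φ t' - φ c|) := by
          apply ENNReal.ofReal_le_ofReal
          have := abs_sub_le (φ 0) (φ t') (φ c)
          linarith
      _ ≤ ENNReal.ofReal |φ 0 - φ t'| + ENNReal.ofReal |φ t' - φ c| := ENNReal.ofReal_add_le
      _ ≤ (∫⁻ r in Set.Icc 0 t', G r) + ∫⁻ r in Set.Icc t' c, G r :=
          add_le_add ht'S.2 hest
      _ = ∫⁻ r in Set.Icc 0 c, G r := lintegral_Icc_split ht'S.1.1 ht'c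
  by_cases hcL : c < L
  · exfalso
    set s := min (c + δ/2) L with hs
    have hsc : c < s := lt_min (by linarith) hcL
    have hsI : s ∈ Set.Icc 0 L := ⟨le_trans hcI.1 hsc.le, min_le_right _ _⟩
    have hdist : |s - c| < δ := by
      rw [abs_sub_lt_iff]
      constructor
      · have : s ≤ c + δ/2 := min_le_left _ _
        linarith
      · linarith
    have hest := hδ s hsI hdist
    rw [min_eq_right hsc.le, max_eq_left hsc.le] at hest
    have hsS : s ∈ S := by
      refine ⟨hsI, ?_⟩
      calc ENNReal.ofReal |φ 0 - φ s|
          ≤ ENNReal.ofReal (|φ 0 - φ c| + |φ c - φ s|) := by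
            apply ENNReal.ofReal_le_ofReal
            have := abs_sub_le (φ 0) (φ c) (φ s)
            linarith
        _ ≤ ENNReal.ofReal |φ 0 - φ c| + ENNReal.ofReal |φ c - φ s| := ENNReal.ofReal_add_le
        _ ≤ (∫⁻ r in Set.Icc 0 c, G r) + ∫⁻ r in Set.Icc c s, G r := by
            refine add_le_add hcS.2 ?_
            rw [abs_sub_comm (φ c) (φ s)]
            exact hest
        _ = ∫⁻ r in Set.Icc 0 s, G r := lintegral_Icc_split hcI.1 hsc.le
    exact absurd (le_csSup hSbdd hsS) (not_le.mpr hsc)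
  · have hcL' : c = L := le_antisymm hcI.2 (not_lt.mp hcL)
    rw [← hcL']
    exact hcS.2

/-- Shrinking integrals over small intervals. -/
lemma shrink_integral {L : ℝ} (G : ℝ → ℝ≥0∞)
    (hfin : ∫⁻ r in Set.Icc 0 L, G r ≠ ∞) (t : ℝ) {ε : ℝ≥0∞} (hε : 0 < ε) :
    ∃ δ > 0, ∫⁻ r in Set.Icc (max (t - δ) 0) (min (t + δ) L), G r ≤ ε := by
  set I := Set.Icc (0:ℝ) L with hI
  set ν := (volume.restrict I).withDensity G with hν
  have hνapp : ∀ s : Set ℝ, MeasurableSet s → ν s = ∫⁻ r in s, G r ∂(volume.restrict I) :=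
    fun s hs => withDensity_apply G hs
  set A : ℕ → Set ℝ := fun n => Set.Icc (max (t - 1/(n+1)) 0) (min (t + 1/(n+1)) L) with hA
  have hAsub : ∀ n, A n ⊆ I := by
    intro n r hr
    exact ⟨le_trans (le_max_right _ _) hr.1, le_trans hr.2 (min_le_right _ _)⟩
  have hAmeas : ∀ n, MeasurableSet (A n) := fun n => measurableSet_Icc
  have hAanti : Antitone A := by
    intro m n hmn
    have hcast : ((m:ℝ)+1) ≤ ((n:ℝ)+1) := by
      have := (Nat.cast_le (α := ℝ)).mpr hmn
      linarith
    have hdiv : 1/((n:ℝ)+1) ≤ 1/((m:ℝ)+1) :=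
      one_div_le_one_div_of_le (by positivity) hcast
    apply Set.Icc_subset_Icc
    · apply max_le_max_right
      linarith
    · apply min_le_min_right
      linarith
  have hνA : ∀ n, ν (A n) = ∫⁻ r in A n, G r := by
    intro n
    rw [hνapp _ (hAmeas n), Measure.restrict_restrict (hAmeas n),
      Set.inter_eq_self_of_subset_left (hAsub n)]
  have hνfin : ν (A 0) ≠ ∞ := by
    rw [hνA]
    exact fun h => hfin (top_le_iff.mp (h ▸ lintegral_mono_set (hAsub 0)))
  have hInt : ⋂ n, A n ⊆ {t} := by
    intro r hr
    simp only [Set.mem_iInter, hA, Set.mem_Icc] at hr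
    have : ∀ n : ℕ, |r - t| ≤ 1/(n+1) := by
      intro n
      obtain ⟨h1, h2⟩ := hr n
      rw [abs_sub_le_iff]
      constructor
      · have := le_trans (le_max_left _ _) h1
        linarith [h2.trans (min_le_left _ _), this]
      · have := h1
        have h1' := le_trans (le_max_left (t - 1/(n+1)) 0) h1
        linarith [h2.trans (min_le_left _ _)]
    have : |r - t| ≤ 0 := by
      by_contra hcon
      push_neg at hcon
      obtain ⟨n, hn⟩ := exists_nat_one_div_lt hcon
      exact absurd (this n) (not_le.mpr hn)
    have : r = t := by
      have := abs_nonneg (r - t)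
      have heq : |r - t| = 0 := le_antisymm ‹|r - t| ≤ 0› this
      rw [abs_eq_zero] at heq
      linarith
    exact this
  have hν0 : ν (⋂ n, A n) = 0 := by
    have : ν (⋂ n, A n) ≤ ν {t} := measure_mono hInt
    have hνt : ν {t} = 0 := by
      rw [hνapp _ (measurableSet_singleton t)]
      apply setLIntegral_measure_zero
      rw [Measure.restrict_apply (measurableSet_singleton t)]
      exact measure_mono_null Set.inter_subset_left (Real.volume_singleton)
    exact le_antisymm (hνt ▸ this) zero_le
  have htend := tendsto_measure_iInter_atTop (μ := ν)
    (fun n => (hAmeas n).nullMeasurableSet) hAanti ⟨0, hνfin⟩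
  rw [hν0] at htend
  rw [ENNReal.tendsto_atTop_zero] at htend
  obtain ⟨N, hN⟩ := htend ε hε
  refine ⟨1/(N+1), by positivity, ?_⟩
  have h2 : ν (A N) ≤ ε := hN N le_rfl
  rw [hνA] at h2
  exact h2

end AuxChain

section AuxSelect

variable {X : Type*} [MetricSpace X] [MeasurableSpace X]

lemma exists_wug_int_lt_top {μ : Measure X} {u : X → ℝ} {A : Set X}
    (h : eD1 μ u A ≠ ∞) :
    ∃ g' : X → ℝ≥0∞, IsWUG μ u g' A ∧ ∫⁻ x in A, g' x ∂μ < ∞ := by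
  have : eD1 μ u A < ∞ := lt_top_iff_ne_top.mpr h
  rw [eD1, iInf_lt_iff] at this
  obtain ⟨g', hg'⟩ := this
  rw [iInf_lt_iff] at hg'
  obtain ⟨h1, h2⟩ := hg'
  exact ⟨g', h1, h2⟩

lemma minwug_integral_lt_top {μ : Measure X} {u : X → ℝ} {A : Set X} {gu : X → ℝ≥0∞}
    (hmin : IsMinWUG μ u gu A) (h : eD1 μ u A ≠ ∞) :
    ∃ g' : X → ℝ≥0∞, IsWUG μ u g' A ∧ ∫⁻ x in A, g' x ∂μ < ∞ ∧
      (∀ᵐ x ∂(μ.restrict A), gu x ≤ g' x) := by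
  obtain ⟨g', hwug, hint⟩ := exists_wug_int_lt_top h
  have hloc : LocIntOn μ g' A := by
    intro x _
    exact ⟨1, one_pos, lt_of_le_of_lt (lintegral_mono_set Set.inter_subset_left) hint⟩
  exact ⟨g', hwug, hint, hmin.2 g' hwug hloc⟩

lemma exists_dominator {μ : Measure X} [SFinite μ] (U : Set X) (gu g' : X → ℝ≥0∞)
    (hg'meas : Measurable g') (hg'int : ∫⁻ x in U, g' x ∂μ ≠ ∞)
    (hae : ∀ᵐ x ∂(μ.restrict U), gu x ≤ g' x) :
    ∃ H : X → ℝ≥0∞, Measurable H ∧ (∀ x ∈ U, gu x ≤ H x) ∧ ∫⁻ x, H x ∂μ ≠ ∞ := by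
  set T := toMeasurable μ U with hT
  have hTmeas : MeasurableSet T := measurableSet_toMeasurable μ U
  have hUT : U ⊆ T := subset_toMeasurable μ U
  have hrestr : μ.restrict T = μ.restrict U := Measure.restrict_toMeasurable_of_sFinite U
  set S := {x : X | ¬ gu x ≤ g' x} with hSdef
  have hS0 : (μ.restrict T) S = 0 := by
    rw [hrestr]
    exact ae_iff.mp hae
  set S' := toMeasurable (μ.restrict T) S with hS'
  have hS'meas : MeasurableSet S' := measurableSet_toMeasurable _ _
  have hSS' : S ⊆ S' := subset_toMeasurable _ _
  have hS'0 : (μ.restrict T) S' = 0 := by rw [measure_toMeasurable]; exact hS0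
  set N := S' ∩ T with hN
  have hNmeas : MeasurableSet N := hS'meas.inter hTmeas
  have hN0 : μ N = 0 := by
    rw [← Measure.restrict_apply' hTmeas]
    exact hS'0
  refine ⟨fun x => T.indicator g' x + N.indicator (fun _ => ∞) x,
    (hg'meas.indicator hTmeas).add (measurable_const.indicator hNmeas), ?_, ?_⟩
  · intro x hx
    by_cases hxg : gu x ≤ g' x
    · have hxT : x ∈ T := hUT hx
      calc gu x ≤ g' x := hxg
        _ = T.indicator g' x := (Set.indicator_of_mem hxT g').symm
        _ ≤ _ := le_self_add
    · have hxN : x ∈ N := ⟨hSS' hxg, hUT hx⟩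
      have : N.indicator (fun _ => (∞:ℝ≥0∞)) x = ∞ := Set.indicator_of_mem hxN _
      calc gu x ≤ ∞ := le_top
        _ = N.indicator (fun _ => (∞:ℝ≥0∞)) x := this.symm
        _ ≤ _ := le_add_self
  · rw [lintegral_add_left (hg'meas.indicator hTmeas),
      lintegral_indicator hTmeas, lintegral_indicator hNmeas, setLIntegral_const,
      hN0, mul_zero, add_zero]
    have : ∫⁻ x in T, g' x ∂μ = ∫⁻ x in U, g' x ∂μ := by
      rw [hT, hrestr]
    rw [this]
    exact hg'int

lemma sigmaFinite_of_doubling {μ : Measure X} {Cd : ℝ} (hdbl : Doubling μ Cd) :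
    SigmaFinite μ := by
  rcases isEmpty_or_nonempty X with hX | hX
  · have : IsFiniteMeasure μ := by
      constructor
      rw [Set.univ_eq_empty_iff.mpr hX]
      simp
    infer_instance
  · obtain ⟨x₀⟩ := hX
    exact ⟨⟨{ set := fun n => ball x₀ (n + 1)
              set_mem := fun _ => trivial
              finite := fun n => (hdbl x₀ (n + 1) (by positivity)).2.2
              spanning := by
                ext y
                simp only [Set.mem_iUnion, Set.mem_univ, iff_true, mem_ball]
                obtain ⟨n, hn⟩ := exists_nat_gt (dist y x₀)
                exact ⟨n, by push_cast; linarith⟩ }⟩⟩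

end AuxSelect


/-- a Leibniz-type rule for gluing Newton-Sobolev functions along
a quasiopen partition. -/
theorem leibniz_gluing_rule {X : Type*} [MetricSpace X] [CompleteSpace X] [MeasurableSpace X] [BorelSpace X]
    (μ : Measure X) (Cd CP lam : ℝ) (hCd : 1 ≤ Cd) (hCP : 0 < CP) (hlam : 1 ≤ lam)
    (hdbl : Doubling μ Cd) (hpoin : PoincareInequality μ CP lam)
    (Ω : Set X) (hΩ : IsOpen Ω) (n : ℕ)
    (U : Fin n → Set X) (hUsub : ∀ j, U j ⊆ Ω) (hUqo : ∀ j, QuasiOpen μ (U j))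
    (hUdisj : ∀ j k, j ≠ k → Disjoint (U j) (U k))
    (η : Fin n → X → ℝ) (hη0 : ∀ j, MemN11Zero μ (η j) (U j) Set.univ)
    (hηrange : ∀ j x, 0 ≤ η j x ∧ η j x ≤ 1)
    (hηzero : ∀ j, ∃ Q : Set X, QuasiOpen μ Q ∧ (U j)ᶜ ⊆ Q ∧ ∀ x ∈ Q, η j x = 0)
    (V : Fin n → Set X) (hVqo : ∀ j, QuasiOpen μ (V j))
    (hV1 : ∀ j, V j ⊆ {x | η j x = 1})
    (U0 : Set X) (hU0 : QuasiOpen μ U0) (hcover : U0 ∪ (⋃ j, V j) = Ω)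
    (v : X → ℝ) (hv : MemN11 μ v U0)
    (ρ : Fin n → X → ℝ) (hρ : ∀ j, MemN11 μ (ρ j) (U j))
    (gρ : Fin n → X → ℝ≥0∞) (hgρ : ∀ j, IsMinWUG μ (ρ j) (gρ j) (U j))
    (gv : X → ℝ≥0∞) (hgv : IsMinWUG μ v gv U0)
    (gη : Fin n → X → ℝ≥0∞) (hgη : ∀ j, IsMinWUG μ (η j) (gη j) Set.univ) :
    IsWUG μ
      (fun x => (∑ j, η j x * ρ j x) + (1 - ∑ j, η j x) * v x)
      (fun x => (∑ j, ENNReal.ofReal (η j x) * gρ j x)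
        + ENNReal.ofReal (1 - ∑ j, η j x) * gv x
        + ∑ j, gη j x * ENNReal.ofReal |ρ j x - v x|)
      Ω := by
  classical
  haveI : SigmaFinite μ := sigmaFinite_of_doubling hdbl
  choose Q hQqo hQsub hQzero using hηzero
  have hηmeas : ∀ j, Measurable (η j) := fun j => (hη0 j).1.1
  have hρmeas : ∀ j, Measurable (ρ j) := fun j => (hρ j).1
  have hvmeas : Measurable v := hv.1
  have hgρmeas : ∀ j, Measurable (gρ j) := fun j => (hgρ j).1.1
  have hgvmeas : Measurable gv := hgv.1.1
  have hgηmeas : ∀ j, Measurable (gη j) := fun j => (hgη j).1.1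
  set w : X → ℝ := fun x => (∑ j, η j x * ρ j x) + (1 - ∑ j, η j x) * v x with hwdef
  set g : X → ℝ≥0∞ := fun x => (∑ j, ENNReal.ofReal (η j x) * gρ j x)
      + ENNReal.ofReal (1 - ∑ j, η j x) * gv x
      + ∑ j, gη j x * ENNReal.ofReal |ρ j x - v x| with hgdef
  have hgmeas : Measurable g := by
    apply Measurable.add
    apply Measurable.add
    · exact Finset.measurable_sum _ fun j _ => ((hηmeas j).ennreal_ofReal).mul (hgρmeas j)
    · exact ((measurable_const.sub (Finset.measurable_sum _ fun j _ =>
        (hηmeas j))).ennreal_ofReal).mul hgvmeas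
    · exact Finset.measurable_sum _ fun j _ =>
        (hgηmeas j).mul (((hρmeas j).sub hvmeas).abs.ennreal_ofReal)
  -- dominators for the minimal weak upper gradients
  have hHρex : ∀ j, ∃ H : X → ℝ≥0∞, Measurable H ∧ (∀ x ∈ U j, gρ j x ≤ H x) ∧
      ∫⁻ x, H x ∂μ ≠ ∞ := by
    intro j
    have hD : eD1 μ (ρ j) (U j) ≠ ∞ := (lt_of_le_of_lt le_add_self (hρ j).2).ne
    obtain ⟨g', hwug, hint, hae⟩ := minwug_integral_lt_top (hgρ j) hD
    exact exists_dominator (U j) (gρ j) g' hwug.1 hint.ne hae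
  choose Hρ hHρmeas hHρle hHρint using hHρex
  have hHvex : ∃ H : X → ℝ≥0∞, Measurable H ∧ (∀ x ∈ U0, gv x ≤ H x) ∧
      ∫⁻ x, H x ∂μ ≠ ∞ := by
    have hD : eD1 μ v U0 ≠ ∞ := (lt_of_le_of_lt le_add_self hv.2).ne
    obtain ⟨g', hwug, hint, hae⟩ := minwug_integral_lt_top hgv hD
    exact exists_dominator U0 gv g' hwug.1 hint.ne hae
  obtain ⟨Hv, hHvmeas, hHvle, hHvint⟩ := hHvex
  have hHηex : ∀ j, ∃ H : X → ℝ≥0∞, Measurable H ∧ (∀ x, gη j x ≤ H x) ∧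
      ∫⁻ x, H x ∂μ ≠ ∞ := by
    intro j
    have hD : eD1 μ (η j) Set.univ ≠ ∞ := (lt_of_le_of_lt le_add_self (hη0 j).1.2).ne
    obtain ⟨g', hwug, hint, hae⟩ := minwug_integral_lt_top (hgη j) hD
    obtain ⟨H, h1, h2, h3⟩ := exists_dominator Set.univ (gη j) g' hwug.1 hint.ne hae
    exact ⟨H, h1, fun x => h2 x (Set.mem_univ x), h3⟩
  choose Hη hHηmeas hHηle hHηint using hHηex
  set h : X → ℝ≥0∞ := fun x => ((∑ j, Hρ j x) + Hv x) + ∑ j, Hη j x with hhdef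
  have hhmeas : Measurable h :=
    ((Finset.measurable_sum _ fun j _ => hHρmeas j).add hHvmeas).add
      (Finset.measurable_sum _ fun j _ => hHηmeas j)
  have hhint : ∫⁻ x, h x ∂μ ≠ ∞ := by
    rw [hhdef]
    simp only
    rw [lintegral_add_left' (show Measurable (fun x => ∑ j, Hρ j x + Hv x) from
      ((Finset.measurable_sum _ fun j (_ : j ∈ Finset.univ) =>
      hHρmeas j).add hHvmeas)).aemeasurable,
      lintegral_add_left' ((Finset.measurable_sum _ fun j (_ : j ∈ Finset.univ) =>
        hHρmeas j)).aemeasurable,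
      lintegral_finset_sum' _ fun j _ => (hHρmeas j).aemeasurable,
      lintegral_finset_sum' _ fun j _ => (hHηmeas j).aemeasurable]
    apply ENNReal.add_ne_top.mpr
    constructor
    · apply ENNReal.add_ne_top.mpr
      constructor
      · exact (ENNReal.sum_lt_top.mpr fun j _ => (hHρint j).lt_top).ne
      · exact hHvint
    · exact (ENNReal.sum_lt_top.mpr fun j _ => (hHηint j).lt_top).ne
  have hhy : ∀ y : X, h y = ((∑ k, Hρ k y) + Hv y) + ∑ k, Hη k y := fun y => rfl
  have hhρ : ∀ (j : Fin n) (y : X), y ∈ U j → gρ j y ≤ h y := by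
    intro j y hy
    rw [hhy y]
    calc gρ j y ≤ Hρ j y := hHρle j y hy
      _ ≤ ∑ k, Hρ k y := Finset.single_le_sum (f := fun k => Hρ k y)
          (fun k _ => zero_le) (Finset.mem_univ j)
      _ ≤ (∑ k, Hρ k y) + Hv y := self_le_add_right _ _
      _ ≤ ((∑ k, Hρ k y) + Hv y) + ∑ k, Hη k y := self_le_add_right _ _
  have hhv : ∀ y ∈ U0, gv y ≤ h y := by
    intro y hy
    rw [hhy y]
    calc gv y ≤ Hv y := hHvle y hy
      _ ≤ (∑ k, Hρ k y) + Hv y := le_add_self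
      _ ≤ ((∑ k, Hρ k y) + Hv y) + ∑ k, Hη k y := self_le_add_right _ _
  have hhη : ∀ (j : Fin n) (y : X), gη j y ≤ h y := by
    intro j y
    rw [hhy y]
    calc gη j y ≤ Hη j y := hHηle j y
      _ ≤ ∑ k, Hη k y := Finset.single_le_sum (f := fun k => Hη k y)
          (fun k _ => zero_le) (Finset.mem_univ j)
      _ ≤ ((∑ k, Hρ k y) + Hv y) + ∑ k, Hη k y := le_add_self
  -- pointwise bounds by g
  have hgy : ∀ y : X, g y = ((∑ k, ENNReal.ofReal (η k y) * gρ k y)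
      + ENNReal.ofReal (1 - ∑ k, η k y) * gv y)
      + ∑ k, gη k y * ENNReal.ofReal |ρ k y - v y| := fun y => rfl
  have hg1 : ∀ (y : X) (j : Fin n), ENNReal.ofReal (η j y) * gρ j y ≤ g y := by
    intro y j
    rw [hgy y]
    calc ENNReal.ofReal (η j y) * gρ j y
        ≤ ∑ k, ENNReal.ofReal (η k y) * gρ k y :=
          Finset.single_le_sum (f := fun k => ENNReal.ofReal (η k y) * gρ k y)
            (fun k _ => zero_le) (Finset.mem_univ j)
      _ ≤ _ := le_trans (self_le_add_right _ _) (self_le_add_right _ _)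
  have hg2 : ∀ y : X, ENNReal.ofReal (1 - ∑ k, η k y) * gv y ≤ g y := by
    intro y
    rw [hgy y]
    exact le_trans le_add_self (self_le_add_right _ _)
  have hg3 : ∀ (y : X) (j : Fin n), gη j y * ENNReal.ofReal |ρ j y - v y| ≤ g y := by
    intro y j
    rw [hgy y]
    refine le_trans ?_ le_add_self
    exact Finset.single_le_sum (f := fun k => gη k y * ENNReal.ofReal |ρ k y - v y|)
      (fun k _ => zero_le) (Finset.mem_univ j)
  -- support facts
  have hηsupp : ∀ (k : Fin n) (y : X), y ∉ U k → η k y = 0 :=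
    fun k y hy => (hη0 k).2 y ⟨Set.mem_univ y, hy⟩
  have hVsubU : ∀ j, V j ⊆ U j := by
    intro j y hy
    by_contra hyU
    have h1 : η j y = 1 := hV1 j hy
    have h0 : η j y = 0 := hηsupp j y hyU
    rw [h0] at h1
    exact one_ne_zero h1.symm
  have hsum_eq : ∀ (y : X) (j : Fin n), y ∈ U j → (∑ k, η k y) = η j y := by
    intro y j hy
    apply Finset.sum_eq_single
    · intro k _ hkj
      apply hηsupp k y
      intro hyk
      exact (hUdisj k j hkj).le_bot ⟨hyk, hy⟩
    · intro hj
      exact absurd (Finset.mem_univ j) hj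
  have hsumρ_eq : ∀ (y : X) (j : Fin n), y ∈ U j →
      (∑ k, η k y * ρ k y) = η j y * ρ j y := by
    intro y j hy
    apply Finset.sum_eq_single
    · intro k _ hkj
      rw [hηsupp k y (fun hyk => (hUdisj k j hkj).le_bot ⟨hyk, hy⟩), zero_mul]
    · intro hj
      exact absurd (Finset.mem_univ j) hj
  have hw_eq : ∀ (y : X) (j : Fin n), y ∈ U j →
      w y = η j y * ρ j y + (1 - η j y) * v y := by
    intro y j hy
    rw [hwdef]
    simp only
    rw [hsumρ_eq y j hy, hsum_eq y j hy]
  have hw_eqV : ∀ (y : X) (j : Fin n), y ∈ V j → w y = ρ j y := by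
    intro y j hy
    rw [hw_eq y j (hVsubU j hy), hV1 j hy]
    ring
  have hw_eq0 : ∀ y : X, (∀ k, η k y = 0) → w y = v y := by
    intro y hy
    rw [hwdef]
    simp only
    rw [Finset.sum_eq_zero fun k _ => by rw [hy k, zero_mul],
      Finset.sum_eq_zero fun k _ => hy k]
    ring
  have hsumη_eq0 : ∀ y : X, (∀ k, η k y = 0) → (∑ k, η k y) = 0 :=
    fun y hy => Finset.sum_eq_zero fun k _ => hy k
  -- the main estimate on good curves
  have hmain : ∀ γ : Curve X, γ.In Ω → (curveIntegral h γ ≠ ∞) →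
      (∀ j, GoodSub (ρ j) (gρ j) (U j) γ) → GoodSub v gv U0 γ →
      (∀ j, GoodSub (η j) (gη j) Set.univ γ) →
      RelOpen U0 γ → (∀ j, RelOpen (U j) γ) → (∀ j, RelOpen (V j) γ) →
      (∀ j, RelOpen (Q j) γ) → ugIneq w g γ := by
    intro γ hin hfin hGρ hGv hGη hRU0 hRU hRV hRQ
    have hL : (0:ℝ) ≤ γ.len := γ.len_nonneg
    have hIfin : (∫⁻ r in Set.Icc (0:ℝ) γ.len, h (γ.toFun r)) ≠ ∞ := hfin
    unfold ugIneq curveIntegral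
    -- the key estimate with slack δ
    have key : ∀ δ : ℝ, 0 < δ →
        ENNReal.ofReal |w (γ.toFun 0) - w (γ.toFun γ.len)| ≤
          (∫⁻ r in Set.Icc (0:ℝ) γ.len, g (γ.toFun r)) +
            ENNReal.ofReal (4*δ) * ∫⁻ r in Set.Icc (0:ℝ) γ.len, h (γ.toFun r) := by
      intro δ hδ
      have hsplit : (∫⁻ r in Set.Icc (0:ℝ) γ.len,
            (g (γ.toFun r) + ENNReal.ofReal (4*δ) * h (γ.toFun r))) =
          (∫⁻ r in Set.Icc (0:ℝ) γ.len, g (γ.toFun r)) +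
            ENNReal.ofReal (4*δ) * ∫⁻ r in Set.Icc (0:ℝ) γ.len, h (γ.toFun r) := by
        rw [lintegral_add_left' (comp_aemeasurable' γ hgmeas),
          lintegral_const_mul' _ _ ENNReal.ofReal_ne_top]
      rw [← hsplit]
      apply chaining hL (fun r => w (γ.toFun r))
      -- the local estimate
      intro t ht
      have hxΩ : γ.toFun t ∈ Ω := hin t ht
      have hx : γ.toFun t ∈ U0 ∪ ⋃ j, V j := by rw [hcover]; exact hxΩ
      by_cases hxV : ∃ j, γ.toFun t ∈ V j
      · -- CASE A : x lies in some V j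
        obtain ⟨j, hxVj⟩ := hxV
        obtain ⟨δ₁, hδ₁, hδ₁prop⟩ := hRV j t ht hxVj
        refine ⟨δ₁, hδ₁, fun s hs hst => ?_⟩
        have hKI : Set.Icc (min s t) (max s t) ⊆ Set.Icc (0:ℝ) γ.len :=
          fun r hr => ⟨le_trans (le_min hs.1 ht.1) hr.1, le_trans hr.2 (max_le hs.2 ht.2)⟩
        have hK : ∀ r ∈ Set.Icc (min s t) (max s t), γ.toFun r ∈ V j := by
          intro r hr
          exact hδ₁prop r (hKI hr) (lt_of_le_of_lt (abs_sub_le_of_between hr.1 hr.2) hst)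
        have hws : w (γ.toFun s) = ρ j (γ.toFun s) :=
          hw_eqV _ j (hK s ⟨min_le_left s t, le_max_left s t⟩)
        have hwt : w (γ.toFun t) = ρ j (γ.toFun t) := hw_eqV _ j hxVj
        simp only [hws, hwt]
        refine le_trans (goodSub_pair (hGρ j) hs ht (fun τ hτ => hVsubU j (hK τ hτ))) ?_
        apply setLIntegral_mono' measurableSet_Icc
        intro r hr
        have hη1 : η j (γ.toFun r) = 1 := hV1 j (hK r hr)
        calc gρ j (γ.toFun r) = ENNReal.ofReal (η j (γ.toFun r)) * gρ j (γ.toFun r) := by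
              rw [hη1]; simp
          _ ≤ g (γ.toFun r) := hg1 _ j
          _ ≤ _ := self_le_add_right _ _
      · -- CASE B : x ∈ U0
        push_neg at hxV
        have hxU0 : γ.toFun t ∈ U0 := by
          rcases hx with hmem | hmem
          · exact hmem
          · obtain ⟨_, ⟨j, rfl⟩, hj⟩ := hmem
            exact absurd hj (hxV j)
        obtain ⟨δ₁, hδ₁, hδ₁prop⟩ := hRU0 t ht hxU0
        by_cases hxU : ∃ j, γ.toFun t ∈ U j
        · -- CASE B1 : x ∈ U0 ∩ U j
          obtain ⟨j, hxUj⟩ := hxU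
          obtain ⟨δ₂, hδ₂, hδ₂prop⟩ := hRU j t ht hxUj
          obtain ⟨δ₃, hδ₃, hδ₃prop⟩ := shrink_integral (L := γ.len)
            (fun r => h (γ.toFun r)) hIfin t (ENNReal.ofReal_pos.mpr hδ)
          refine ⟨min (min δ₁ δ₂) δ₃, by positivity, fun s hs hst => ?_⟩
          have hsK : s ∈ Set.Icc (min s t) (max s t) := ⟨min_le_left s t, le_max_left s t⟩
          have htK : t ∈ Set.Icc (min s t) (max s t) := ⟨min_le_right s t, le_max_right s t⟩
          have hKI : Set.Icc (min s t) (max s t) ⊆ Set.Icc (0:ℝ) γ.len :=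
            fun r hr => ⟨le_trans (le_min hs.1 ht.1) hr.1, le_trans hr.2 (max_le hs.2 ht.2)⟩
          have hrdist : ∀ r ∈ Set.Icc (min s t) (max s t), |r - t| < min (min δ₁ δ₂) δ₃ :=
            fun r hr => lt_of_le_of_lt (abs_sub_le_of_between hr.1 hr.2) hst
          have hKU0 : ∀ r ∈ Set.Icc (min s t) (max s t), γ.toFun r ∈ U0 :=
            fun r hr => hδ₁prop r (hKI hr) (lt_of_lt_of_le (hrdist r hr)
              (le_trans (min_le_left _ _) (min_le_left _ _)))
          have hKUj : ∀ r ∈ Set.Icc (min s t) (max s t), γ.toFun r ∈ U j :=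
            fun r hr => hδ₂prop r (hKI hr) (lt_of_lt_of_le (hrdist r hr)
              (le_trans (min_le_left _ _) (min_le_right _ _)))
          have hsubK : ∀ r1 ∈ Set.Icc (min s t) (max s t), ∀ r2 ∈ Set.Icc (min s t) (max s t),
              Set.Icc (min r1 r2) (max r1 r2) ⊆ Set.Icc (min s t) (max s t) :=
            fun r1 h1 r2 h2 => Set.Icc_subset_Icc (le_min h1.1 h2.1) (max_le h1.2 h2.2)
          have hsmall : ∀ r1 ∈ Set.Icc (min s t) (max s t), ∀ r2 ∈ Set.Icc (min s t) (max s t),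
              (∫⁻ r in Set.Icc (min r1 r2) (max r1 r2), h (γ.toFun r)) ≤ ENNReal.ofReal δ := by
            intro r1 h1 r2 h2
            refine le_trans (lintegral_mono_set ?_) hδ₃prop
            intro r hr
            have hrK : r ∈ Set.Icc (min s t) (max s t) := hsubK r1 h1 r2 h2 hr
            have hd := lt_of_lt_of_le (hrdist r hrK) (min_le_right _ _)
            rw [abs_sub_lt_iff] at hd
            have hrI := hKI hrK
            constructor
            · exact max_le (by linarith [hd.2]) hrI.1
            · exact le_min (by linarith [hd.1]) hrI.2
          -- oscillation bounds within the window
          have hηwin : ∀ r ∈ Set.Icc (min s t) (max s t), |η j (γ.toFun r) - η j (γ.toFun t)| ≤ δ := by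
            intro r hr
            refine goodSub_pair_real (hGη j) (hKI hr) ht (fun τ _ => Set.mem_univ _) hδ.le ?_
            refine le_trans (setLIntegral_mono' measurableSet_Icc fun τ _ => hhη j _) ?_
            exact hsmall r hr t htK
          have hρwin : ∀ r ∈ Set.Icc (min s t) (max s t), |ρ j (γ.toFun r) - ρ j (γ.toFun s)| ≤ δ := by
            intro r hr
            refine goodSub_pair_real (hGρ j) (hKI hr) (hKI hsK)
              (fun τ hτ => hKUj τ (hsubK r hr s hsK hτ)) hδ.le ?_
            refine le_trans (setLIntegral_mono' measurableSet_Icc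
              (fun τ hτ => hhρ j _ (hKUj τ (hsubK r hr s hsK hτ)))) ?_
            exact hsmall r hr s hsK
          have hvwin : ∀ r ∈ Set.Icc (min s t) (max s t), |v (γ.toFun r) - v (γ.toFun s)| ≤ δ := by
            intro r hr
            refine goodSub_pair_real hGv (hKI hr) (hKI hsK)
              (fun τ hτ => hKU0 τ (hsubK r hr s hsK hτ)) hδ.le ?_
            refine le_trans (setLIntegral_mono' measurableSet_Icc
              (fun τ hτ => hhv _ (hKU0 τ (hsubK r hr s hsK hτ)))) ?_
            exact hsmall r hr s hsK
          -- scalar decomposition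
          have hq0 : 0 ≤ η j (γ.toFun t) := (hηrange j _).1
          have hq1 : η j (γ.toFun t) ≤ 1 := (hηrange j _).2
          have hws : w (γ.toFun s) = η j (γ.toFun s) * ρ j (γ.toFun s) +
              (1 - η j (γ.toFun s)) * v (γ.toFun s) := hw_eq _ j (hKUj s hsK)
          have hwt : w (γ.toFun t) = η j (γ.toFun t) * ρ j (γ.toFun t) +
              (1 - η j (γ.toFun t)) * v (γ.toFun t) := hw_eq _ j hxUj
          have hscal : |w (γ.toFun s) - w (γ.toFun t)| ≤
              (1 - η j (γ.toFun t)) * |v (γ.toFun s) - v (γ.toFun t)|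
              + η j (γ.toFun t) * |ρ j (γ.toFun s) - ρ j (γ.toFun t)|
              + |η j (γ.toFun s) - η j (γ.toFun t)| * |ρ j (γ.toFun s) - v (γ.toFun s)| := by
            rw [hws, hwt]
            set p := η j (γ.toFun s)
            set q := η j (γ.toFun t)
            set a1 := ρ j (γ.toFun s)
            set a2 := ρ j (γ.toFun t)
            set b1 := v (γ.toFun s)
            set b2 := v (γ.toFun t)
            have hiden : (p*a1 + (1-p)*b1) - (q*a2 + (1-q)*b2)
                = ((1-q)*(b1-b2) + q*(a1-a2)) + (p-q)*(a1-b1) := by ring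
            rw [hiden]
            calc |((1-q)*(b1-b2) + q*(a1-a2)) + (p-q)*(a1-b1)|
                ≤ |(1-q)*(b1-b2) + q*(a1-a2)| + |(p-q)*(a1-b1)| := abs_add_le _ _
              _ ≤ |(1-q)*(b1-b2)| + |q*(a1-a2)| + |(p-q)*(a1-b1)| := by
                  have := abs_add_le ((1-q)*(b1-b2)) (q*(a1-a2))
                  linarith
              _ = (1-q) * |b1-b2| + q * |a1-a2| + |p-q| * |a1-b1| := by
                  rw [abs_mul, abs_mul, abs_mul, abs_of_nonneg (by linarith : (0:ℝ) ≤ 1 - q),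
                    abs_of_nonneg hq0]
          -- pass to ℝ≥0∞
          have hofReal : ENNReal.ofReal |w (γ.toFun s) - w (γ.toFun t)| ≤
              ENNReal.ofReal (1 - η j (γ.toFun t)) * ENNReal.ofReal |v (γ.toFun s) - v (γ.toFun t)|
              + ENNReal.ofReal (η j (γ.toFun t)) * ENNReal.ofReal |ρ j (γ.toFun s) - ρ j (γ.toFun t)|
              + ENNReal.ofReal |η j (γ.toFun s) - η j (γ.toFun t)| *
                  ENNReal.ofReal |ρ j (γ.toFun s) - v (γ.toFun s)| := by
            refine le_trans (ENNReal.ofReal_le_ofReal hscal) ?_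
            refine le_trans ENNReal.ofReal_add_le ?_
            refine add_le_add (le_trans ENNReal.ofReal_add_le (add_le_add ?_ ?_)) ?_
            · exact (ENNReal.ofReal_mul (by linarith)).le
            · exact (ENNReal.ofReal_mul hq0).le
            · exact (ENNReal.ofReal_mul (abs_nonneg _)).le
          -- the three term estimates
          have hΔv := goodSub_pair hGv hs ht hKU0
          have hΔρ := goodSub_pair (hGρ j) hs ht hKUj
          have hΔη := goodSub_pair (hGη j) hs ht (fun τ _ => Set.mem_univ _)
          have hT1 : ENNReal.ofReal (1 - η j (γ.toFun t)) *
              ENNReal.ofReal |v (γ.toFun s) - v (γ.toFun t)| ≤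
              ∫⁻ r in Set.Icc (min s t) (max s t),
                (ENNReal.ofReal (1 - ∑ k, η k (γ.toFun r)) * gv (γ.toFun r)
                  + ENNReal.ofReal δ * h (γ.toFun r)) := by
            calc ENNReal.ofReal (1 - η j (γ.toFun t)) *
                ENNReal.ofReal |v (γ.toFun s) - v (γ.toFun t)|
                ≤ ENNReal.ofReal (1 - η j (γ.toFun t)) *
                  ∫⁻ r in Set.Icc (min s t) (max s t), gv (γ.toFun r) := mul_le_mul_right hΔv _
              _ = ∫⁻ r in Set.Icc (min s t) (max s t),
                  ENNReal.ofReal (1 - η j (γ.toFun t)) * gv (γ.toFun r) :=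
                  (lintegral_const_mul' _ _ ENNReal.ofReal_ne_top).symm
              _ ≤ _ := by
                  apply setLIntegral_mono' measurableSet_Icc
                  intro r hr
                  have hcol : (∑ k, η k (γ.toFun r)) = η j (γ.toFun r) :=
                    hsum_eq _ j (hKUj r hr)
                  have hwle := abs_sub_le_iff.mp (hηwin r hr)
                  have h1 : (1 - η j (γ.toFun t)) ≤ (1 - ∑ k, η k (γ.toFun r)) + δ := by
                    rw [hcol]; linarith [hwle.1, hwle.2]
                  calc ENNReal.ofReal (1 - η j (γ.toFun t)) * gv (γ.toFun r)
                      ≤ (ENNReal.ofReal (1 - ∑ k, η k (γ.toFun r)) + ENNReal.ofReal δ) *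
                        gv (γ.toFun r) := by
                        apply mul_le_mul_left
                        exact le_trans (ENNReal.ofReal_le_ofReal h1) ENNReal.ofReal_add_le
                    _ = ENNReal.ofReal (1 - ∑ k, η k (γ.toFun r)) * gv (γ.toFun r)
                        + ENNReal.ofReal δ * gv (γ.toFun r) := add_mul _ _ _
                    _ ≤ ENNReal.ofReal (1 - ∑ k, η k (γ.toFun r)) * gv (γ.toFun r)
                        + ENNReal.ofReal δ * h (γ.toFun r) := by
                        gcongr
                        exact hhv _ (hKU0 r hr)
          have hT2 : ENNReal.ofReal (η j (γ.toFun t)) *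
              ENNReal.ofReal |ρ j (γ.toFun s) - ρ j (γ.toFun t)| ≤
              ∫⁻ r in Set.Icc (min s t) (max s t),
                (ENNReal.ofReal (η j (γ.toFun r)) * gρ j (γ.toFun r)
                  + ENNReal.ofReal δ * h (γ.toFun r)) := by
            calc ENNReal.ofReal (η j (γ.toFun t)) *
                ENNReal.ofReal |ρ j (γ.toFun s) - ρ j (γ.toFun t)|
                ≤ ENNReal.ofReal (η j (γ.toFun t)) *
                  ∫⁻ r in Set.Icc (min s t) (max s t), gρ j (γ.toFun r) := mul_le_mul_right hΔρ _
              _ = ∫⁻ r in Set.Icc (min s t) (max s t),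
                  ENNReal.ofReal (η j (γ.toFun t)) * gρ j (γ.toFun r) :=
                  (lintegral_const_mul' _ _ ENNReal.ofReal_ne_top).symm
              _ ≤ _ := by
                  apply setLIntegral_mono' measurableSet_Icc
                  intro r hr
                  have hwle := abs_sub_le_iff.mp (hηwin r hr)
                  have h1 : η j (γ.toFun t) ≤ η j (γ.toFun r) + δ := by
                    linarith [hwle.1, hwle.2]
                  calc ENNReal.ofReal (η j (γ.toFun t)) * gρ j (γ.toFun r)
                      ≤ (ENNReal.ofReal (η j (γ.toFun r)) + ENNReal.ofReal δ) * gρ j (γ.toFun r) := by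
                        apply mul_le_mul_left
                        exact le_trans (ENNReal.ofReal_le_ofReal h1) ENNReal.ofReal_add_le
                    _ = ENNReal.ofReal (η j (γ.toFun r)) * gρ j (γ.toFun r)
                        + ENNReal.ofReal δ * gρ j (γ.toFun r) := add_mul _ _ _
                    _ ≤ ENNReal.ofReal (η j (γ.toFun r)) * gρ j (γ.toFun r)
                        + ENNReal.ofReal δ * h (γ.toFun r) := by
                        gcongr
                        exact hhρ j _ (hKUj r hr)
          have hT3 : ENNReal.ofReal |η j (γ.toFun s) - η j (γ.toFun t)| *
              ENNReal.ofReal |ρ j (γ.toFun s) - v (γ.toFun s)| ≤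
              ∫⁻ r in Set.Icc (min s t) (max s t),
                (gη j (γ.toFun r) * ENNReal.ofReal |ρ j (γ.toFun r) - v (γ.toFun r)|
                  + ENNReal.ofReal (2*δ) * h (γ.toFun r)) := by
            calc ENNReal.ofReal |η j (γ.toFun s) - η j (γ.toFun t)| *
                ENNReal.ofReal |ρ j (γ.toFun s) - v (γ.toFun s)|
                ≤ (∫⁻ r in Set.Icc (min s t) (max s t), gη j (γ.toFun r)) *
                  ENNReal.ofReal |ρ j (γ.toFun s) - v (γ.toFun s)| := mul_le_mul_left hΔη _
              _ = ∫⁻ r in Set.Icc (min s t) (max s t),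
                  gη j (γ.toFun r) * ENNReal.ofReal |ρ j (γ.toFun s) - v (γ.toFun s)| :=
                  (lintegral_mul_const' _ _ ENNReal.ofReal_ne_top).symm
              _ ≤ _ := by
                  apply setLIntegral_mono' measurableSet_Icc
                  intro r hr
                  have h1 := hρwin r hr
                  have h2 := hvwin r hr
                  have hb : |ρ j (γ.toFun s) - v (γ.toFun s)| ≤
                      |ρ j (γ.toFun r) - v (γ.toFun r)| + 2*δ := by
                    have e1 : ρ j (γ.toFun s) - v (γ.toFun s) =
                        (ρ j (γ.toFun r) - v (γ.toFun r)) +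
                          ((ρ j (γ.toFun s) - ρ j (γ.toFun r)) + (v (γ.toFun r) - v (γ.toFun s))) := by
                      ring
                    rw [e1]
                    refine le_trans (abs_add_le _ _) ?_
                    have h3 := abs_add_le (ρ j (γ.toFun s) - ρ j (γ.toFun r))
                      (v (γ.toFun r) - v (γ.toFun s))
                    have h4 : |ρ j (γ.toFun s) - ρ j (γ.toFun r)| ≤ δ := by
                      rw [abs_sub_comm]; exact h1
                    have h5 : |v (γ.toFun r) - v (γ.toFun s)| ≤ δ := h2
                    linarith
                  calc gη j (γ.toFun r) * ENNReal.ofReal |ρ j (γ.toFun s) - v (γ.toFun s)|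
                      ≤ gη j (γ.toFun r) * (ENNReal.ofReal |ρ j (γ.toFun r) - v (γ.toFun r)|
                        + ENNReal.ofReal (2*δ)) := by
                        apply mul_le_mul_right
                        exact le_trans (ENNReal.ofReal_le_ofReal hb) ENNReal.ofReal_add_le
                    _ = gη j (γ.toFun r) * ENNReal.ofReal |ρ j (γ.toFun r) - v (γ.toFun r)|
                        + gη j (γ.toFun r) * ENNReal.ofReal (2*δ) := mul_add _ _ _
                    _ ≤ gη j (γ.toFun r) * ENNReal.ofReal |ρ j (γ.toFun r) - v (γ.toFun r)|
                        + ENNReal.ofReal (2*δ) * h (γ.toFun r) := by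
                        rw [mul_comm (gη j (γ.toFun r)) (ENNReal.ofReal (2*δ))]
                        gcongr
                        exact hhη j _
          -- combine
          have hcompK : ∀ {f : X → ℝ≥0∞}, Measurable f →
              AEMeasurable (fun r => f (γ.toFun r))
                (volume.restrict (Set.Icc (min s t) (max s t))) := by
            intro f hf
            exact (comp_aemeasurable' γ hf).mono_measure (Measure.restrict_mono hKI le_rfl)
          have hmeasF1 : Measurable (fun y => ENNReal.ofReal (1 - ∑ k, η k y) * gv y
              + ENNReal.ofReal δ * h y) :=
            (((measurable_const.sub (Finset.measurable_sum _ fun k _ =>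
              hηmeas k)).ennreal_ofReal).mul hgvmeas).add (measurable_const.mul hhmeas)
          have hmeasF2 : Measurable (fun y => ENNReal.ofReal (η j y) * gρ j y
              + ENNReal.ofReal δ * h y) :=
            (((hηmeas j).ennreal_ofReal).mul (hgρmeas j)).add (measurable_const.mul hhmeas)
          have hadd12 : (∫⁻ r in Set.Icc (min s t) (max s t),
                (ENNReal.ofReal (1 - ∑ k, η k (γ.toFun r)) * gv (γ.toFun r)
                  + ENNReal.ofReal δ * h (γ.toFun r)))
              + (∫⁻ r in Set.Icc (min s t) (max s t),
                (ENNReal.ofReal (η j (γ.toFun r)) * gρ j (γ.toFun r)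
                  + ENNReal.ofReal δ * h (γ.toFun r)))
              + (∫⁻ r in Set.Icc (min s t) (max s t),
                (gη j (γ.toFun r) * ENNReal.ofReal |ρ j (γ.toFun r) - v (γ.toFun r)|
                  + ENNReal.ofReal (2*δ) * h (γ.toFun r)))
              = ∫⁻ r in Set.Icc (min s t) (max s t),
                ((ENNReal.ofReal (1 - ∑ k, η k (γ.toFun r)) * gv (γ.toFun r)
                  + ENNReal.ofReal δ * h (γ.toFun r))
                + (ENNReal.ofReal (η j (γ.toFun r)) * gρ j (γ.toFun r)
                  + ENNReal.ofReal δ * h (γ.toFun r))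
                + (gη j (γ.toFun r) * ENNReal.ofReal |ρ j (γ.toFun r) - v (γ.toFun r)|
                  + ENNReal.ofReal (2*δ) * h (γ.toFun r))) := by
            rw [lintegral_add_left' (show AEMeasurable (fun r =>
                (ENNReal.ofReal (1 - ∑ k, η k (γ.toFun r)) * gv (γ.toFun r)
                  + ENNReal.ofReal δ * h (γ.toFun r))
                + (ENNReal.ofReal (η j (γ.toFun r)) * gρ j (γ.toFun r)
                  + ENNReal.ofReal δ * h (γ.toFun r)))
                (volume.restrict (Set.Icc (min s t) (max s t))) from
                (hcompK hmeasF1).add (hcompK hmeasF2)),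
              lintegral_add_left' (hcompK hmeasF1)]
          refine le_trans hofReal ?_
          refine le_trans (add_le_add (add_le_add hT1 hT2) hT3) ?_
          rw [hadd12]
          apply setLIntegral_mono' measurableSet_Icc
          intro r hr
          have e : ENNReal.ofReal δ * h (γ.toFun r) + ENNReal.ofReal δ * h (γ.toFun r)
              + ENNReal.ofReal (2*δ) * h (γ.toFun r) = ENNReal.ofReal (4*δ) * h (γ.toFun r) := by
            rw [← add_mul, ← add_mul, ← ENNReal.ofReal_add hδ.le hδ.le,
              ← ENNReal.ofReal_add (by linarith) (by linarith)]
            ring_nf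
          calc (ENNReal.ofReal (1 - ∑ k, η k (γ.toFun r)) * gv (γ.toFun r)
                + ENNReal.ofReal δ * h (γ.toFun r))
              + (ENNReal.ofReal (η j (γ.toFun r)) * gρ j (γ.toFun r)
                + ENNReal.ofReal δ * h (γ.toFun r))
              + (gη j (γ.toFun r) * ENNReal.ofReal |ρ j (γ.toFun r) - v (γ.toFun r)|
                + ENNReal.ofReal (2*δ) * h (γ.toFun r))
              = (ENNReal.ofReal (1 - ∑ k, η k (γ.toFun r)) * gv (γ.toFun r)
                + ENNReal.ofReal (η j (γ.toFun r)) * gρ j (γ.toFun r)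
                + gη j (γ.toFun r) * ENNReal.ofReal |ρ j (γ.toFun r) - v (γ.toFun r)|)
                + (ENNReal.ofReal δ * h (γ.toFun r) + ENNReal.ofReal δ * h (γ.toFun r)
                  + ENNReal.ofReal (2*δ) * h (γ.toFun r)) := by ring
            _ ≤ g (γ.toFun r) + ENNReal.ofReal (4*δ) * h (γ.toFun r) := by
                rw [e]
                apply add_le_add _ le_rfl
                rw [hgy (γ.toFun r)]
                have hA1 : ENNReal.ofReal (η j (γ.toFun r)) * gρ j (γ.toFun r) ≤
                    ∑ k, ENNReal.ofReal (η k (γ.toFun r)) * gρ k (γ.toFun r) :=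
                  Finset.single_le_sum (f := fun k => ENNReal.ofReal (η k (γ.toFun r)) *
                    gρ k (γ.toFun r)) (fun k _ => zero_le) (Finset.mem_univ j)
                have hC1 : gη j (γ.toFun r) * ENNReal.ofReal |ρ j (γ.toFun r) - v (γ.toFun r)| ≤
                    ∑ k, gη k (γ.toFun r) * ENNReal.ofReal |ρ k (γ.toFun r) - v (γ.toFun r)| :=
                  Finset.single_le_sum (f := fun k => gη k (γ.toFun r) *
                    ENNReal.ofReal |ρ k (γ.toFun r) - v (γ.toFun r)|)
                    (fun k _ => zero_le) (Finset.mem_univ j)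
                calc ENNReal.ofReal (1 - ∑ k, η k (γ.toFun r)) * gv (γ.toFun r)
                      + ENNReal.ofReal (η j (γ.toFun r)) * gρ j (γ.toFun r)
                      + gη j (γ.toFun r) * ENNReal.ofReal |ρ j (γ.toFun r) - v (γ.toFun r)|
                    = ENNReal.ofReal (η j (γ.toFun r)) * gρ j (γ.toFun r)
                      + ENNReal.ofReal (1 - ∑ k, η k (γ.toFun r)) * gv (γ.toFun r)
                      + gη j (γ.toFun r) * ENNReal.ofReal |ρ j (γ.toFun r) - v (γ.toFun r)| := by
                      ring
                  _ ≤ _ := add_le_add (add_le_add hA1 le_rfl) hC1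
        · -- CASE B0 : x outside every U j
          push_neg at hxU
          have hxQ : ∀ k, γ.toFun t ∈ Q k := fun k => hQsub k (hxU k)
          choose δQ hδQpos hδQprop using fun k => hRQ k t ht (hxQ k)
          obtain ⟨δ₂, hδ₂, hδ₂le⟩ := fin_min δQ hδQpos
          refine ⟨min δ₁ δ₂, lt_min hδ₁ hδ₂, fun s hs hst => ?_⟩
          have hKI : Set.Icc (min s t) (max s t) ⊆ Set.Icc (0:ℝ) γ.len :=
            fun r hr => ⟨le_trans (le_min hs.1 ht.1) hr.1, le_trans hr.2 (max_le hs.2 ht.2)⟩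
          have hrdist : ∀ r ∈ Set.Icc (min s t) (max s t), |r - t| < min δ₁ δ₂ :=
            fun r hr => lt_of_le_of_lt (abs_sub_le_of_between hr.1 hr.2) hst
          have hKU0 : ∀ r ∈ Set.Icc (min s t) (max s t), γ.toFun r ∈ U0 :=
            fun r hr => hδ₁prop r (hKI hr) (lt_of_lt_of_le (hrdist r hr) (min_le_left _ _))
          have hKQ : ∀ r ∈ Set.Icc (min s t) (max s t), ∀ k, η k (γ.toFun r) = 0 := by
            intro r hr k
            apply hQzero k
            exact hδQprop k r (hKI hr) (lt_of_lt_of_le (hrdist r hr)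
              (le_trans (min_le_right _ _) (hδ₂le k)))
          have hws : w (γ.toFun s) = v (γ.toFun s) :=
            hw_eq0 _ (hKQ s ⟨min_le_left s t, le_max_left s t⟩)
          have hwt : w (γ.toFun t) = v (γ.toFun t) :=
            hw_eq0 _ (hKQ t ⟨min_le_right s t, le_max_right s t⟩)
          simp only [hws, hwt]
          refine le_trans (goodSub_pair hGv hs ht hKU0) ?_
          apply setLIntegral_mono' measurableSet_Icc
          intro r hr
          calc gv (γ.toFun r)
              = ENNReal.ofReal (1 - ∑ k, η k (γ.toFun r)) * gv (γ.toFun r) := by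
                rw [hsumη_eq0 _ (hKQ r hr)]
                simp
            _ ≤ g (γ.toFun r) := hg2 _
            _ ≤ _ := self_le_add_right _ _
    -- conclude by letting δ → 0
    have hBM : Filter.Tendsto (fun m : ℕ =>
        (∫⁻ r in Set.Icc (0:ℝ) γ.len, g (γ.toFun r)) +
          ENNReal.ofReal (4*(1/(m+1))) * ∫⁻ r in Set.Icc (0:ℝ) γ.len, h (γ.toFun r))
        Filter.atTop (𝓝 ((∫⁻ r in Set.Icc (0:ℝ) γ.len, g (γ.toFun r)) + 0)) := by
      apply Filter.Tendsto.add tendsto_const_nhds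
      have h1 : Filter.Tendsto (fun m : ℕ => ENNReal.ofReal (4*(1/(m+1)))) Filter.atTop (𝓝 0) := by
        have h2 : Filter.Tendsto (fun m : ℕ => 4*(1/((m:ℝ)+1))) Filter.atTop (𝓝 (4*0)) :=
          (tendsto_one_div_add_atTop_nhds_zero_nat).const_mul 4
        rw [mul_zero] at h2
        have := ENNReal.tendsto_ofReal h2
        simpa using this
      have h3 := ENNReal.Tendsto.mul_const h1
        (Or.inr hIfin)
      simpa using h3
    rw [add_zero] at hBM
    exact ge_of_tendsto' hBM fun m => key (1/(m+1)) (by positivity)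

  refine ⟨hgmeas, ?_⟩
  apply mod1_null_subset (Γ' :=
    {γ : Curve X | curveIntegral h γ = ∞} ∪
    ({γ : Curve X | ¬ GoodSub v gv U0 γ} ∪
    ({γ : Curve X | ¬ RelOpen U0 γ} ∪
    ((⋃ j, {γ : Curve X | ¬ GoodSub (ρ j) (gρ j) (U j) γ}) ∪
    ((⋃ j, {γ : Curve X | ¬ GoodSub (η j) (gη j) Set.univ γ}) ∪
    ((⋃ j, {γ : Curve X | ¬ RelOpen (U j) γ}) ∪
    ((⋃ j, {γ : Curve X | ¬ RelOpen (V j) γ}) ∪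
    (⋃ j, {γ : Curve X | ¬ RelOpen (Q j) γ}))))))))
  · intro γ hγ
    by_contra hmem
    simp only [Set.mem_union, Set.mem_iUnion, Set.mem_setOf_eq, not_or, not_exists,
      not_not] at hmem
    obtain ⟨h1, h2, h3, h4, h5, h6, h7, h8⟩ := hmem
    exact hγ.2 (hmain γ hγ.1 h1 h4 h2 h5 h3 h6 h7 h8)
  · exact mod1_null_union (mod1_null_of_infinite_integral μ hhmeas hhint _ (fun γ hγ => hγ))
      (mod1_null_union (mod1_null_not_goodSub hgv.1)
      (mod1_null_union (mod1_null_not_relOpen hU0)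
      (mod1_null_union (mod1_null_iUnion_fin _ fun j => mod1_null_not_goodSub (hgρ j).1)
      (mod1_null_union (mod1_null_iUnion_fin _ fun j => mod1_null_not_goodSub (hgη j).1)
      (mod1_null_union (mod1_null_iUnion_fin _ fun j => mod1_null_not_relOpen (hUqo j))
      (mod1_null_union (mod1_null_iUnion_fin _ fun j => mod1_null_not_relOpen (hVqo j))
      (mod1_null_iUnion_fin _ fun j => mod1_null_not_relOpen (hQqo j))))))))


end Lahti
end
end

section
/- Let X = ℝ with the Euclidean metric and the weighted Lebesgue measure dμ := ω dL¹, where ω = 1 on [−1,1] and ω = 2 on ℝ∖[−1,1], and let u := χ_{[−1,1]}. Then: (i) for every function v ∈ N^{1,1}(X) with v(x) ≥ χ_{[−1,1]}(x) for every x ∈ ℝ, every upper gradient g of v satisfies ∫_ℝ g dμ ≥ 4, and hence the minimal 1-weak upper gradient g_v of v satisfies ∫_ℝ g_v dμ ≥ 4; and (ii) ‖Du‖(X) ≤ 2. Consequently, the multiplicative constant C_a (applied to the jump part ‖Du‖^j) in the N^{1,1}-approximation-from-above theorem for BV functions cannot be replaced by a constant equal to 1 in this setting. -/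
open MeasureTheory Metric Filter
open scoped ENNReal NNReal Topology

noncomputable section

namespace Lahti

variable {X : Type*} [MetricSpace X] [MeasurableSpace X]

/-! ### Auxiliary development for the weighted line example -/

section Example19

open Set

/-- The weight. -/
noncomputable def Dw : ℝ → ℝ≥0∞ := fun x => if x ∈ Set.Icc (-1:ℝ) 1 then 1 else 2

/-- The weighted measure. -/
noncomputable def μ₀ : Measure ℝ := (volume : Measure ℝ).withDensity Dw

/-- The function `u`. -/
noncomputable def u₀ : ℝ → ℝ := Set.indicator (Set.Icc (-1:ℝ) 1) (fun _ => (1:ℝ))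

lemma measurable_Dw : Measurable Dw :=
  Measurable.ite measurableSet_Icc measurable_const measurable_const

lemma Dw_le (x : ℝ) : Dw x ≤ 2 := by unfold Dw; split <;> simp

lemma one_le_Dw (x : ℝ) : 1 ≤ Dw x := by unfold Dw; split <;> simp

lemma μ₀_apply {s : Set ℝ} (hs : MeasurableSet s) : μ₀ s = ∫⁻ x in s, Dw x :=
  withDensity_apply _ hs

lemma le_μ₀ {s : Set ℝ} (hs : MeasurableSet s) : volume s ≤ μ₀ s := by
  rw [μ₀_apply hs]
  calc volume s = ∫⁻ _ in s, 1 := by simp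
  _ ≤ _ := lintegral_mono fun x => one_le_Dw x

lemma μ₀_le {s : Set ℝ} (hs : MeasurableSet s) : μ₀ s ≤ 2 * volume s := by
  rw [μ₀_apply hs]
  calc ∫⁻ x in s, Dw x ≤ ∫⁻ _ in s, 2 := lintegral_mono fun x => Dw_le x
  _ = 2 * volume s := by rw [setLIntegral_const]

lemma setLIntegral_μ₀ {s : Set ℝ} (hs : MeasurableSet s) {g : ℝ → ℝ≥0∞} (hg : Measurable g) :
    ∫⁻ x in s, g x ∂μ₀ = ∫⁻ x in s, Dw x * g x := by
  rw [μ₀, restrict_withDensity hs, lintegral_withDensity_eq_lintegral_mul _ measurable_Dw hg]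
  rfl

lemma Mod1_empty {X : Type*} [MetricSpace X] [MeasurableSpace X] (μ : Measure X) :
    Mod1 μ (∅ : Set (Curve X)) = 0 := by
  refine le_antisymm ?_ zero_le
  refine le_trans (iInf₂_le (fun _ => 0)
    ⟨measurable_const, fun γ hγ => absurd hγ (Set.notMem_empty γ)⟩) ?_
  simp

lemma isWUG_of_forall {X : Type*} [MetricSpace X] [MeasurableSpace X] (μ : Measure X)
    {u : X → ℝ} {g : X → ℝ≥0∞} {A : Set X} (hg : Measurable g)
    (h : ∀ γ : Curve X, ugIneq u g γ) : IsWUG μ u g A := by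
  refine ⟨hg, ?_⟩
  have he : {γ : Curve X | γ.In A ∧ ¬ ugIneq u g γ} = ∅ := by
    ext γ; simp [h γ]
  rw [he, Mod1_empty]

lemma eD1_le {X : Type*} [MetricSpace X] [MeasurableSpace X] (μ : Measure X)
    {u : X → ℝ} {g : X → ℝ≥0∞} {A : Set X} (h : IsWUG μ u g A) :
    eD1 μ u A ≤ ∫⁻ x in A, g x ∂μ :=
  iInf₂_le g h

lemma mp_sigma {σ : ℝ} (hσ : σ = 1 ∨ σ = -1) :
    MeasurePreserving (fun x : ℝ => σ * x) volume volume := by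
  rcases hσ with rfl | rfl
  · have h : (fun x : ℝ => (1:ℝ) * x) = id := by funext x; simp
    rw [h]; exact MeasurePreserving.id _
  · have h : (fun x : ℝ => (-1:ℝ) * x) = Neg.neg := by funext x; simp
    rw [h]; exact Measure.measurePreserving_neg _

lemma emb_sigma {σ : ℝ} (hσ : σ = 1 ∨ σ = -1) :
    MeasurableEmbedding (fun x : ℝ => σ * x) := by
  rcases hσ with rfl | rfl
  · have h : (fun x : ℝ => (1:ℝ) * x) = id := by funext x; simp
    rw [h]; exact MeasurableEmbedding.id
  · have h : (fun x : ℝ => (-1:ℝ) * x) = Neg.neg := by funext x; simp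
    rw [h]; exact (Homeomorph.neg ℝ).isClosedEmbedding.measurableEmbedding

lemma half {σ : ℝ} (hσ : σ = 1 ∨ σ = -1) {v : ℝ → ℝ} (hv0 : ∀ x, 0 ≤ v x)
    (hv1 : ∀ x ∈ Set.Icc (-1:ℝ) 1, 1 ≤ v x)
    (hvL1 : ∫⁻ x, ENNReal.ofReal |v x| ∂μ₀ ≠ ∞)
    {g : ℝ → ℝ≥0∞} (hg : Measurable g) (hug : ∀ γ : Curve ℝ, ugIneq v g γ) :
    2 ≤ ∫⁻ x in (fun t : ℝ => σ * t) '' Set.Ioi 1, g x ∂μ₀ := by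
  have hσabs : |σ| = 1 := by rcases hσ with rfl | rfl <;> simp
  set e : ℝ → ℝ := fun t => σ * t with he
  have hinv : ∀ x, e (e x) = x := by
    intro x; simp only [he]; rcases hσ with rfl | rfl <;> ring
  have hRpre : e '' Set.Ioi 1 = e ⁻¹' Set.Ioi 1 :=
    congrFun (Set.image_eq_preimage_of_inverse hinv hinv) (Set.Ioi 1)
  have hRmeas : MeasurableSet (e '' Set.Ioi 1) := by
    rw [hRpre]; exact (emb_sigma hσ).measurable measurableSet_Ioi
  have hnotIcc : ∀ x ∈ e '' Set.Ioi 1, x ∉ Set.Icc (-1:ℝ) 1 := by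
    rintro x ⟨t, ht, rfl⟩ hx
    rw [Set.mem_Icc] at hx
    have habs : |σ * t| ≤ 1 := abs_le.2 hx
    rw [abs_mul, hσabs, one_mul, abs_of_pos (lt_trans one_pos ht)] at habs
    exact absurd ht (by simpa using not_lt.2 habs)
  have hvolR : volume (e '' Set.Ioi 1) = ∞ := by
    rw [hRpre, (mp_sigma hσ).measure_preimage measurableSet_Ioi.nullMeasurableSet]
    exact Real.volume_Ioi
  have hμR : μ₀ (e '' Set.Ioi 1) = ∞ :=
    top_le_iff.1 (hvolR ▸ le_μ₀ hRmeas)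
  rw [setLIntegral_μ₀ hRmeas hg]
  rw [setLIntegral_congr_fun hRmeas (
    (fun x hx => by rw [Dw, if_neg (hnotIcc x hx)] : ∀ x, x ∈ e '' Set.Ioi 1 →
      Dw x * g x = (fun y => 2 * g y) x))]
  rw [lintegral_const_mul 2 hg]
  have key : (1 : ℝ≥0∞) ≤ ∫⁻ x in e '' Set.Ioi 1, g x := by
    refine ENNReal.le_of_forall_pos_le_add fun ε hε _ => ?_
    rcases le_or_gt 1 (ε : ℝ) with hε1 | hε1
    · refine le_add_left ?_
      exact_mod_cast hε1
    have hε0 : (0:ℝ) < ε := hε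
    have hex : ∃ t, 1 < t ∧ v (e t) ≤ ε := by
      by_contra hc
      push_neg at hc
      apply hvL1
      have hvR : ∀ x ∈ e '' Set.Ioi 1,
          ENNReal.ofReal (ε:ℝ) ≤ ENNReal.ofReal |v x| := by
        rintro x ⟨t, ht, rfl⟩
        exact ENNReal.ofReal_le_ofReal (le_trans (hc t ht).le (le_abs_self _))
      have hbig : ENNReal.ofReal (ε:ℝ) * μ₀ (e '' Set.Ioi 1)
          ≤ ∫⁻ x, ENNReal.ofReal |v x| ∂μ₀ := by
        calc ENNReal.ofReal (ε:ℝ) * μ₀ (e '' Set.Ioi 1)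
            = ∫⁻ _ in e '' Set.Ioi 1, ENNReal.ofReal (ε:ℝ) ∂μ₀ :=
              (setLIntegral_const _ _).symm
        _ ≤ ∫⁻ x in e '' Set.Ioi 1, ENNReal.ofReal |v x| ∂μ₀ :=
              setLIntegral_mono' hRmeas hvR
        _ ≤ _ := setLIntegral_le_lintegral _ _
      rw [hμR, ENNReal.mul_top (ENNReal.ofReal_pos.2 hε0).ne'] at hbig
      exact top_le_iff.1 hbig
    obtain ⟨t, ht1, htv⟩ := hex
    have hlip : LipschitzWith 1 (fun s : ℝ => e (1 + s)) := by
      apply LipschitzWith.of_dist_le_mul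
      intro a b
      simp only [he, Real.dist_eq, NNReal.coe_one, one_mul]
      rw [show σ * (1+a) - σ * (1+b) = σ * (a - b) by ring, abs_mul, hσabs, one_mul]
    set γ : Curve ℝ := ⟨t - 1, by linarith, fun s => e (1 + s), hlip.lipschitzOnWith⟩
      with hγdef
    have h0 : γ.toFun 0 = σ := by simp [hγdef, he]
    have hLfun : γ.toFun γ.len = e t := by
      show e (1 + (t - 1)) = e t
      norm_num
    have hseIcc : σ ∈ Set.Icc (-1:ℝ) 1 := by rcases hσ with rfl | rfl <;> norm_num
    have hdiff : ENNReal.ofReal (1 - ε) ≤ curveIntegral g γ := by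
      refine le_trans ?_ (hug γ)
      rw [h0, hLfun]
      apply ENNReal.ofReal_le_ofReal
      have h1v : 1 ≤ v σ := hv1 σ hseIcc
      have h0v : 0 ≤ v (e t) := hv0 _
      calc (1:ℝ) - ε ≤ v σ - v (e t) := by linarith
      _ ≤ |v σ - v (e t)| := le_abs_self _
    have hcv : curveIntegral g γ ≤ ∫⁻ x in e '' Set.Ioi 1, g x := by
      unfold curveIntegral
      have hpres : MeasurePreserving (fun s : ℝ => e (1 + s)) volume volume :=
        (mp_sigma hσ).comp (measurePreserving_add_left volume 1)
      have hemb : MeasurableEmbedding (fun s : ℝ => e (1 + s)) :=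
        (emb_sigma hσ).comp ((Homeomorph.addLeft (1:ℝ)).isClosedEmbedding.measurableEmbedding)
      have hγlen : γ.len = t - 1 := rfl
      have hγfun : ∀ s, γ.toFun s = e (1 + s) := fun s => rfl
      calc ∫⁻ s in Set.Icc 0 γ.len, g (γ.toFun s)
          = ∫⁻ s in Set.Icc 0 (t-1), g (e (1 + s)) := by rw [hγlen]
      _ = ∫⁻ x in (fun s : ℝ => e (1 + s)) '' Set.Icc 0 (t-1), g x :=
          hpres.setLIntegral_comp_emb hemb g _
      _ ≤ ∫⁻ x in (e '' Set.Ioi 1) ∪ {σ}, g x := by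
          refine lintegral_mono' (Measure.restrict_mono ?_ le_rfl) le_rfl
          rintro _ ⟨s, hs, rfl⟩
          rcases eq_or_lt_of_le hs.1 with h | h
          · right; simp [he, ← h]
          · left; exact ⟨1 + s, by simpa using h, rfl⟩
      _ ≤ (∫⁻ x in e '' Set.Ioi 1, g x) + ∫⁻ x in {σ}, g x := lintegral_union_le _ _ _
      _ = ∫⁻ x in e '' Set.Ioi 1, g x := by
          rw [setLIntegral_measure_zero _ _ (measure_singleton σ), add_zero]
    have hJ : ENNReal.ofReal (1 - ε) ≤ ∫⁻ x in e '' Set.Ioi 1, g x := hdiff.trans hcv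
    calc (1:ℝ≥0∞) = ENNReal.ofReal (1 - ε) + ENNReal.ofReal (ε:ℝ) := by
          rw [← ENNReal.ofReal_add (by linarith) hε0.le]
          norm_num
    _ ≤ (∫⁻ x in e '' Set.Ioi 1, g x) + (ε:ℝ≥0∞) :=
          add_le_add hJ (by rw [ENNReal.ofReal_coe_nnreal])
  calc (2:ℝ≥0∞) = 2 * 1 := by norm_num
  _ ≤ 2 * ∫⁻ x in e '' Set.Ioi 1, g x := mul_le_mul_right key 2

lemma main4 {v : ℝ → ℝ} (hv0 : ∀ x, 0 ≤ v x)
    (hv1 : ∀ x ∈ Set.Icc (-1:ℝ) 1, 1 ≤ v x)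
    (hvL1 : ∫⁻ x, ENNReal.ofReal |v x| ∂μ₀ ≠ ∞)
    {g : ℝ → ℝ≥0∞} (hg : Measurable g) (hug : ∀ γ : Curve ℝ, ugIneq v g γ) :
    4 ≤ ∫⁻ x, g x ∂μ₀ := by
  have h1 := half (Or.inl rfl) hv0 hv1 hvL1 hg hug
  have h2 := half (Or.inr rfl) hv0 hv1 hvL1 hg hug
  have hi1 : (fun t : ℝ => (1:ℝ) * t) '' Set.Ioi 1 = Set.Ioi 1 := by simp
  have hi2 : (fun t : ℝ => (-1:ℝ) * t) '' Set.Ioi 1 = Set.Iio (-1 : ℝ) := by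
    ext x
    constructor
    · rintro ⟨t, ht, rfl⟩
      simp only [Set.mem_Iio]
      rw [Set.mem_Ioi] at ht
      nlinarith
    · intro hx
      rw [Set.mem_Iio] at hx
      exact ⟨-x, by simp [Set.mem_Ioi]; linarith, by ring⟩
  rw [hi1] at h1
  rw [hi2] at h2
  have hdisj : Disjoint (Set.Iio (-1:ℝ)) (Set.Ioi 1) := by
    rw [Set.disjoint_left]
    intro x hx hx'
    rw [Set.mem_Iio] at hx
    rw [Set.mem_Ioi] at hx'
    linarith
  calc (4:ℝ≥0∞) = 2 + 2 := by norm_num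
  _ ≤ (∫⁻ x in Set.Iio (-1:ℝ), g x ∂μ₀) + ∫⁻ x in Set.Ioi (1:ℝ), g x ∂μ₀ := add_le_add h2 h1
  _ = ∫⁻ x in Set.Iio (-1:ℝ) ∪ Set.Ioi 1, g x ∂μ₀ :=
      (lintegral_union measurableSet_Ioi hdisj).symm
  _ ≤ ∫⁻ x, g x ∂μ₀ := setLIntegral_le_lintegral _ _

lemma partA {v : ℝ → ℝ} (hN : MemN11 μ₀ v Set.univ) (hvu : ∀ x, u₀ x ≤ v x) :
    (∀ g : ℝ → ℝ≥0∞, IsUpperGradient v g → (4:ℝ≥0∞) ≤ ∫⁻ x, g x ∂μ₀) ∧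
      (4:ℝ≥0∞) ≤ eD1 μ₀ v Set.univ := by
  have hu0 : ∀ x, (0:ℝ) ≤ u₀ x := fun x => Set.indicator_nonneg (fun _ _ => zero_le_one) x
  have hu1 : ∀ x ∈ Set.Icc (-1:ℝ) 1, u₀ x = 1 := fun x hx => Set.indicator_of_mem hx _
  have hv0 : ∀ x, 0 ≤ v x := fun x => (hu0 x).trans (hvu x)
  have hv1 : ∀ x ∈ Set.Icc (-1:ℝ) 1, 1 ≤ v x := fun x hx => (hu1 x hx) ▸ hvu x
  have hL1 : ∫⁻ x, ENNReal.ofReal |v x| ∂μ₀ ≠ ∞ := by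
    have h := hN.2
    rw [eN11] at h
    have h' : eL1 μ₀ v Set.univ < ∞ := lt_of_le_of_lt le_self_add h
    rw [eL1, Measure.restrict_univ] at h'
    exact h'.ne
  constructor
  · intro g hge
    exact main4 hv0 hv1 hL1 hge.1 hge.2
  · rw [eD1]
    refine le_iInf fun g => le_iInf fun hW => ?_
    rw [Measure.restrict_univ]
    obtain ⟨hgm, hmod⟩ := hW
    refine ENNReal.le_of_forall_pos_le_add fun ε hε _ => ?_
    have hmodlt : Mod1 μ₀ {γ : Curve ℝ | γ.In Set.univ ∧ ¬ugIneq v g γ} < (ε:ℝ≥0∞) := by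
      rw [hmod]
      exact_mod_cast hε
    rw [Mod1] at hmodlt
    obtain ⟨ρ, hρ⟩ := iInf_lt_iff.1 hmodlt
    obtain ⟨⟨hρm, hρadm⟩, hρint⟩ := iInf_lt_iff.1 hρ
    set v' : ℝ → ℝ := fun x => min (v x) 1 with hv'def
    have hv'0 : ∀ x, 0 ≤ v' x := fun x => le_min (hv0 x) zero_le_one
    have hv'1 : ∀ x ∈ Set.Icc (-1:ℝ) 1, 1 ≤ v' x := fun x hx => le_min (hv1 x hx) le_rfl
    have hv'le : ∀ x, |v' x| ≤ |v x| := fun x => by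
      rw [abs_of_nonneg (hv'0 x), abs_of_nonneg (hv0 x)]
      exact min_le_left _ _
    have hL1' : ∫⁻ x, ENNReal.ofReal |v' x| ∂μ₀ ≠ ∞ :=
      ne_top_of_le_ne_top hL1 (lintegral_mono fun x => ENNReal.ofReal_le_ofReal (hv'le x))
    have habs : ∀ a b : ℝ, |min a 1 - min b 1| ≤ |a - b| := by
      intro a b
      have h := (LipschitzWith.id.min_const 1).dist_le_mul a b
      simpa [Real.dist_eq] using h
    set G : ℝ → ℝ≥0∞ := fun x => g x + ρ x with hGdef
    have hGm : Measurable G := hgm.add hρm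
    have hUG : ∀ γ : Curve ℝ, ugIneq v' G γ := by
      intro γ
      by_cases hγ : ugIneq v g γ
      · unfold ugIneq at hγ ⊢
        refine le_trans (ENNReal.ofReal_le_ofReal (habs _ _)) (le_trans hγ ?_)
        exact lintegral_mono fun t => le_self_add
      · have h1 : 1 ≤ curveIntegral ρ γ := hρadm γ ⟨fun t _ => Set.mem_univ _, hγ⟩
        unfold ugIneq
        refine le_trans ?_ (le_trans h1 (lintegral_mono fun t => le_add_self))
        rw [← ENNReal.ofReal_one]
        apply ENNReal.ofReal_le_ofReal
        have ha := hv'0 (γ.toFun 0); have hb := hv'0 (γ.toFun γ.len)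
        have ha1 : v' (γ.toFun 0) ≤ 1 := min_le_right _ _
        have hb1 : v' (γ.toFun γ.len) ≤ 1 := min_le_right _ _
        rw [abs_le]
        constructor <;> linarith
    have h4 := main4 hv'0 hv'1 hL1' hGm hUG
    rw [hGdef, lintegral_add_left hgm] at h4
    exact le_trans h4 (add_le_add le_rfl hρint.le)

/-! #### The approximating sequence for the total variation -/

/-- Clamp function. -/
noncomputable def mfun (a y : ℝ) : ℝ := min 1 (max a y)

/-- The approximation. -/
noncomputable def Sfun (c x : ℝ) : ℝ := c * (1 - mfun (1 - 1/c) |x|)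

/-- The transition zone. -/
def Tset (c : ℝ) : Set ℝ := {x : ℝ | 1 - 1/c ≤ |x| ∧ |x| ≤ 1}

/-- The upper gradient of the approximation. -/
noncomputable def gfun (c : ℝ) : ℝ → ℝ≥0∞ := (Tset c).indicator fun _ => ENNReal.ofReal c

lemma ha0 {c : ℝ} (hc : 1 ≤ c) : 0 ≤ 1 - 1/c := by
  have hc0 : 0 < c := lt_of_lt_of_le one_pos hc
  have h : 1/c ≤ 1 := by rw [div_le_one hc0]; exact hc
  linarith

lemma ha1 {c : ℝ} (hc : 1 ≤ c) : 1 - 1/c ≤ 1 := by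
  have hc0 : 0 < c := lt_of_lt_of_le one_pos hc
  have h : 0 ≤ 1/c := by positivity
  linarith

lemma mfun_mem {c : ℝ} (hc : 1 ≤ c) (y : ℝ) : mfun (1 - 1/c) y ∈ Set.Icc (1 - 1/c) 1 :=
  ⟨le_min (ha1 hc) (le_max_left _ _), min_le_left _ _⟩

lemma mfun_lip (a : ℝ) : LipschitzWith 1 (mfun a) :=
  (LipschitzWith.id.const_max a).const_min 1

lemma Sfun_bounds {c : ℝ} (hc : 1 ≤ c) (x : ℝ) : Sfun c x ∈ Set.Icc (0:ℝ) 1 := by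
  have hc0 : 0 < c := lt_of_lt_of_le one_pos hc
  obtain ⟨h1, h2⟩ := mfun_mem hc |x|
  constructor
  · exact mul_nonneg hc0.le (by linarith)
  · unfold Sfun
    have h : c * (1 - mfun (1-1/c) |x|) ≤ c * (1/c) :=
      mul_le_mul_of_nonneg_left (by linarith) hc0.le
    rw [mul_one_div_cancel hc0.ne'] at h
    exact h

lemma Tset_meas {c : ℝ} : MeasurableSet (Tset c) :=
  (isClosed_Icc.preimage continuous_abs).measurableSet

lemma Tset_eq {c : ℝ} (hc : 1 ≤ c) :
    Tset c = Set.Icc (-1:ℝ) 1 \ Set.Ioo (-(1-1/c)) (1-1/c) := by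
  ext x
  constructor
  · rintro ⟨hax, hx1⟩
    refine ⟨abs_le.1 hx1, fun hmem => ?_⟩
    rw [Set.mem_Ioo] at hmem
    rcases le_abs.1 hax with h' | h' <;> linarith [hmem.1, hmem.2]
  · rintro ⟨hx, h⟩
    rw [Set.mem_Icc] at hx
    refine ⟨?_, abs_le.2 hx⟩
    rw [Set.mem_Ioo, not_and_or, not_lt, not_lt] at h
    rcases h with h' | h'
    · exact le_abs.2 (Or.inr (by linarith))
    · exact le_abs.2 (Or.inl h')

lemma vol_Tset {c : ℝ} (hc : 1 ≤ c) : volume (Tset c) = ENNReal.ofReal (2/c) := by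
  have h0 := ha0 hc
  have h1 := ha1 hc
  rw [Tset_eq hc,
    measure_diff (Set.Ioo_subset_Icc_self.trans (Set.Icc_subset_Icc (by linarith) h1))
      measurableSet_Ioo.nullMeasurableSet measure_Ioo_lt_top.ne,
    Real.volume_Icc, Real.volume_Ioo]
  rw [← ENNReal.ofReal_sub _ (by linarith : (0:ℝ) ≤ 1 - 1/c - -(1-1/c))]
  congr 1
  have hc0 : c ≠ 0 := (lt_of_lt_of_le one_pos hc).ne'
  field_simp
  ring

lemma μ₀_Tset {c : ℝ} (hc : 1 ≤ c) : μ₀ (Tset c) = volume (Tset c) := by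
  rw [μ₀_apply Tset_meas]
  rw [setLIntegral_congr_fun Tset_meas (
    (fun x hx => by rw [Dw, if_pos (Set.mem_Icc.2 (abs_le.1 hx.2))] : ∀ x, x ∈ Tset c →
      Dw x = (fun _ => (1:ℝ≥0∞)) x))]
  simp

lemma int_gfun {c : ℝ} (hc : 1 ≤ c) : ∫⁻ x, gfun c x ∂μ₀ = 2 := by
  have hc0 : 0 < c := lt_of_lt_of_le one_pos hc
  rw [gfun, lintegral_indicator Tset_meas, setLIntegral_const, μ₀_Tset hc, vol_Tset hc,
    ← ENNReal.ofReal_mul hc0.le, show c * (2/c) = 2 by field_simp]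
  norm_num

lemma Sfun_ug {c : ℝ} (hc : 1 ≤ c) (γ : Curve ℝ) : ugIneq (Sfun c) (gfun c) γ := by
  have hc0 : 0 < c := lt_of_lt_of_le one_pos hc
  set a : ℝ := 1 - 1/c with hadef
  have ha0' : 0 ≤ a := ha0 hc
  have ha1' : a ≤ 1 := ha1 hc
  set L : ℝ := γ.len with hLdef
  have hL0 : 0 ≤ L := γ.len_nonneg
  set ψ : ℝ → ℝ := fun t => |γ.toFun t| with hψdef
  set φ : ℝ → ℝ := fun t => mfun a (ψ t) with hφdef
  have hγc : ContinuousOn γ.toFun (Set.Icc 0 L) := γ.lipschitz.continuousOn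
  have hψc : ContinuousOn ψ (Set.Icc 0 L) := continuous_abs.comp_continuousOn hγc
  have hφc : ContinuousOn φ (Set.Icc 0 L) := (mfun_lip a).continuous.comp_continuousOn hψc
  set A : Set ℝ := Set.Icc 0 L ∩ ψ ⁻¹' Set.Icc a 1 with hAdef
  have hAc : IsClosed A := hψc.preimage_isClosed_of_isClosed isClosed_Icc isClosed_Icc
  have hAK : A ⊆ Set.Icc 0 L := Set.inter_subset_left
  have hψlip : LipschitzOnWith 1 ψ A := by
    have hγl : LipschitzOnWith 1 γ.toFun A := γ.lipschitz.mono hAK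
    intro s hs t ht
    calc edist (ψ s) (ψ t) ≤ edist (γ.toFun s) (γ.toFun t) := by
          rw [edist_dist, edist_dist]
          apply ENNReal.ofReal_le_ofReal
          rw [Real.dist_eq, Real.dist_eq]
          exact abs_abs_sub_abs_le_abs_sub _ _
    _ ≤ 1 * edist s t := hγl hs ht
  have himg : volume (ψ '' A) ≤ volume A := by
    have h := hψlip.hausdorffMeasure_image_le (by norm_num : (0:ℝ) ≤ 1)
    rw [MeasureTheory.hausdorffMeasure_real] at h
    simpa using h
  have hpmem : φ 0 ∈ Set.Icc a 1 := mfun_mem hc _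
  have hqmem : φ L ∈ Set.Icc a 1 := mfun_mem hc _
  set p : ℝ := φ 0 with hpdef
  set q : ℝ := φ L with hqdef
  have hIoosub : Set.Ioo (min p q) (max p q) ⊆ ψ '' A := by
    intro y hy
    have hya : a < y := lt_of_le_of_lt (le_min hpmem.1 hqmem.1) hy.1
    have hy1 : y < 1 := lt_of_lt_of_le hy.2 (max_le hpmem.2 hqmem.2)
    have hexists : ∃ t ∈ Set.Icc 0 L, φ t = y := by
      rcases le_total p q with hpq | hpq
      · have hmem : y ∈ Set.Icc (φ 0) (φ L) := by
          rw [← hpdef, ← hqdef]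
          exact ⟨(min_eq_left hpq ▸ hy.1).le, (max_eq_right hpq ▸ hy.2).le⟩
        obtain ⟨t, ht, hty⟩ := intermediate_value_Icc hL0 hφc hmem
        exact ⟨t, ht, hty⟩
      · have hmem : y ∈ Set.Icc (φ L) (φ 0) := by
          rw [← hpdef, ← hqdef]
          exact ⟨(min_eq_right hpq ▸ hy.1).le, (max_eq_left hpq ▸ hy.2).le⟩
        obtain ⟨t, ht, hty⟩ := intermediate_value_Icc' hL0 hφc hmem
        exact ⟨t, ht, hty⟩
    obtain ⟨t, htK, hty⟩ := hexists
    have hφt : mfun a (ψ t) = y := hty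
    have hψt : ψ t = y := by
      unfold mfun at hφt
      rcases le_total (ψ t) a with h | h
      · rw [max_eq_left h, min_eq_right ha1'] at hφt
        linarith
      · rw [max_eq_right h] at hφt
        rcases le_total 1 (ψ t) with h1 | h1
        · rw [min_eq_left h1] at hφt
          linarith
        · rw [min_eq_right h1] at hφt
          exact hφt
    exact ⟨t, ⟨htK, by rw [Set.mem_preimage, hψt]; exact ⟨hya.le, hy1.le⟩⟩, hψt⟩
  have hvol1 : ENNReal.ofReal |p - q| ≤ volume A := by
    calc ENNReal.ofReal |p - q| = volume (Set.Ioo (min p q) (max p q)) := by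
          rw [Real.volume_Ioo, max_sub_min_eq_abs, abs_sub_comm p q]
    _ ≤ volume (ψ '' A) := measure_mono hIoosub
    _ ≤ volume A := himg
  have hRHS : ENNReal.ofReal c * volume A ≤ curveIntegral (gfun c) γ := by
    unfold curveIntegral
    calc ENNReal.ofReal c * volume A = ∫⁻ _ in A, ENNReal.ofReal c :=
          (setLIntegral_const _ _).symm
    _ = ∫⁻ t in A, gfun c (γ.toFun t) := by
          refine setLIntegral_congr_fun hAc.measurableSet
            (fun t ht => ?_)
          rw [gfun, Set.indicator_of_mem]
          exact ⟨ht.2.1, ht.2.2⟩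
    _ ≤ ∫⁻ t in Set.Icc 0 γ.len, gfun c (γ.toFun t) := by
          rw [← hLdef]
          exact lintegral_mono' (Measure.restrict_mono hAK le_rfl) le_rfl
  have hLHS : ENNReal.ofReal |Sfun c (γ.toFun 0) - Sfun c (γ.toFun γ.len)|
      = ENNReal.ofReal c * ENNReal.ofReal |p - q| := by
    have hdiffeq : Sfun c (γ.toFun 0) - Sfun c (γ.toFun γ.len) = c * (q - p) := by
      show c * (1 - mfun (1 - 1/c) |γ.toFun 0|) - c * (1 - mfun (1 - 1/c) |γ.toFun γ.len|)
        = c * (q - p)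
      rw [hqdef, hpdef, hφdef]
      simp only [hψdef, ← hadef, ← hLdef]
      ring
    rw [hdiffeq, abs_mul, abs_of_pos hc0, ENNReal.ofReal_mul hc0.le, abs_sub_comm q p]
  unfold ugIneq
  rw [hLHS]
  exact le_trans (mul_le_mul_right hvol1 _) hRHS

lemma Sfun_cont {c : ℝ} : Continuous (Sfun c) :=
  continuous_const.mul (continuous_const.sub ((mfun_lip _).continuous.comp continuous_abs))

lemma Sfun_lipug {c : ℝ} (hc : 1 ≤ c) (γ : Curve ℝ) :
    ugIneq (Sfun c) (fun _ => ENNReal.ofReal c) γ := by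
  have hc0 : 0 < c := lt_of_lt_of_le one_pos hc
  unfold ugIneq curveIntegral
  have hm : ∀ y z : ℝ, |mfun (1-1/c) y - mfun (1-1/c) z| ≤ |y - z| := fun y z => by
    simpa [Real.dist_eq] using (mfun_lip (1-1/c)).dist_le_mul y z
  have hd : dist (γ.toFun 0) (γ.toFun γ.len) ≤ γ.len := by
    have h := γ.lipschitz.dist_le_mul 0 ⟨le_rfl, γ.len_nonneg⟩ γ.len
      ⟨γ.len_nonneg, le_rfl⟩
    simpa [Real.dist_eq, abs_of_nonneg γ.len_nonneg] using h
  have h1 : |Sfun c (γ.toFun 0) - Sfun c (γ.toFun γ.len)| ≤ c * γ.len := by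
    have heq : Sfun c (γ.toFun 0) - Sfun c (γ.toFun γ.len)
        = c * (mfun (1-1/c) |γ.toFun γ.len| - mfun (1-1/c) |γ.toFun 0|) := by
      unfold Sfun
      ring
    rw [heq, abs_mul, abs_of_pos hc0]
    refine mul_le_mul_of_nonneg_left ?_ hc0.le
    refine le_trans (hm _ _) (le_trans (abs_abs_sub_abs_le_abs_sub _ _) ?_)
    rw [Real.dist_eq] at hd
    rw [abs_sub_comm]
    exact hd
  calc ENNReal.ofReal |Sfun c (γ.toFun 0) - Sfun c (γ.toFun γ.len)|
      ≤ ENNReal.ofReal (c * γ.len) := ENNReal.ofReal_le_ofReal h1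
  _ = ENNReal.ofReal c * ENNReal.ofReal γ.len := ENNReal.ofReal_mul hc0.le
  _ = ∫⁻ _ in Set.Icc 0 γ.len, ENNReal.ofReal c := by
      rw [setLIntegral_const, Real.volume_Icc, sub_zero]

lemma Sfun_memloc {c : ℝ} (hc : 1 ≤ c) : MemN11loc μ₀ (Sfun c) Set.univ := by
  refine ⟨Sfun_cont.measurable, fun x _ => ⟨1, one_pos, ?_⟩⟩
  rw [Set.univ_inter]
  have hb : μ₀ (ball x 1) < ∞ := by
    refine lt_of_le_of_lt (μ₀_le measurableSet_ball) ?_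
    rw [Real.volume_ball]
    exact ENNReal.mul_lt_top (by norm_num) ENNReal.ofReal_lt_top
  rw [eN11]
  have hL : eL1 μ₀ (Sfun c) (ball x 1) < ∞ := by
    rw [eL1]
    calc ∫⁻ y in ball x 1, ENNReal.ofReal |Sfun c y| ∂μ₀
        ≤ ∫⁻ _ in ball x 1, 1 ∂μ₀ := by
          refine lintegral_mono fun y => ?_
          rw [← ENNReal.ofReal_one]
          refine ENNReal.ofReal_le_ofReal (abs_le.2 ⟨?_, (Sfun_bounds hc y).2⟩)
          linarith [(Sfun_bounds hc y).1]
    _ = μ₀ (ball x 1) := by simp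
    _ < ∞ := hb
  have hD : eD1 μ₀ (Sfun c) (ball x 1) < ∞ := by
    refine lt_of_le_of_lt (eD1_le μ₀ (isWUG_of_forall μ₀ measurable_const (Sfun_lipug hc))) ?_
    rw [setLIntegral_const]
    exact ENNReal.mul_lt_top ENNReal.ofReal_lt_top hb
  exact ENNReal.add_lt_top.2 ⟨hL, hD⟩

lemma Sfun_diff_le {c : ℝ} (hc : 1 ≤ c) (y : ℝ) :
    ENNReal.ofReal |Sfun c y - u₀ y| ≤ (Tset c).indicator (fun _ => (1:ℝ≥0∞)) y := by
  have hc0 : 0 < c := lt_of_lt_of_le one_pos hc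
  by_cases hy : y ∈ Tset c
  · rw [Set.indicator_of_mem hy, ← ENNReal.ofReal_one]
    apply ENNReal.ofReal_le_ofReal
    have h1 := Sfun_bounds hc y
    have h20 : (0:ℝ) ≤ u₀ y := Set.indicator_nonneg (fun _ _ => zero_le_one) y
    have h21 : u₀ y ≤ 1 := by
      unfold u₀ Set.indicator
      split <;> norm_num
    rw [abs_le]
    constructor <;> [linarith [h1.1, h1.2]; linarith [h1.1, h1.2]]
  · rw [Set.indicator_of_notMem hy]
    have heq : Sfun c y = u₀ y := by
      rcases not_and_or.1 hy with h | h
      · push_neg at h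
        have hm : mfun (1-1/c) |y| = 1 - 1/c := by
          unfold mfun
          rw [max_eq_left h.le, min_eq_right (ha1 hc)]
        have hy1 : |y| ≤ 1 := le_trans h.le (ha1 hc)
        have hu : u₀ y = 1 := Set.indicator_of_mem (Set.mem_Icc.2 (abs_le.1 hy1)) _
        unfold Sfun
        rw [hm, hu]
        field_simp
        ring
      · push_neg at h
        have hm : mfun (1-1/c) |y| = 1 := by
          unfold mfun
          rw [max_eq_right (le_trans (ha1 hc) h.le), min_eq_left h.le]
        have hu : u₀ y = 0 :=
          Set.indicator_of_notMem (fun hmem => absurd (abs_le.2 (Set.mem_Icc.1 hmem)) (not_le.2 h)) _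
        unfold Sfun
        rw [hm, hu]
        ring
    rw [heq]
    simp

lemma Sfun_tendsto : TendstoL1loc μ₀ (fun i => Sfun ((i:ℝ)+1)) u₀ Set.univ := by
  intro x _
  refine ⟨1, one_pos, ?_⟩
  have hbound : ∀ i : ℕ,
      (∫⁻ y in Set.univ ∩ ball x 1, ENNReal.ofReal |Sfun ((i:ℝ)+1) y - u₀ y| ∂μ₀)
        ≤ ENNReal.ofReal (4/((i:ℝ)+1)) := by
    intro i
    have hc : (1:ℝ) ≤ (i:ℝ)+1 := le_add_of_nonneg_left (Nat.cast_nonneg i)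
    calc (∫⁻ y in Set.univ ∩ ball x 1, ENNReal.ofReal |Sfun ((i:ℝ)+1) y - u₀ y| ∂μ₀)
        ≤ ∫⁻ y in Set.univ ∩ ball x 1,
            (Tset ((i:ℝ)+1)).indicator (fun _ => (1:ℝ≥0∞)) y ∂μ₀ :=
          lintegral_mono fun y => Sfun_diff_le hc y
    _ ≤ ∫⁻ y, (Tset ((i:ℝ)+1)).indicator (fun _ => (1:ℝ≥0∞)) y ∂μ₀ :=
          setLIntegral_le_lintegral _ _
    _ = μ₀ (Tset ((i:ℝ)+1)) := by
          rw [lintegral_indicator Tset_meas, setLIntegral_const, one_mul]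
    _ = volume (Tset ((i:ℝ)+1)) := μ₀_Tset hc
    _ = ENNReal.ofReal (2/((i:ℝ)+1)) := vol_Tset hc
    _ ≤ ENNReal.ofReal (4/((i:ℝ)+1)) := by
          apply ENNReal.ofReal_le_ofReal
          have hp : (0:ℝ) < (i:ℝ)+1 := by positivity
          rw [div_le_div_iff₀ hp hp]
          nlinarith
  refine tendsto_of_tendsto_of_tendsto_of_le_of_le tendsto_const_nhds ?_
    (fun i => zero_le) hbound
  rw [show (0:ℝ≥0∞) = ENNReal.ofReal 0 by simp]
  apply ENNReal.tendsto_ofReal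
  apply Filter.Tendsto.div_atTop (tendsto_const_nhds (x := (4:ℝ)))
  exact tendsto_atTop_add_const_right atTop 1 tendsto_natCast_atTop_atTop

lemma Sfun_eD1_le {c : ℝ} (hc : 1 ≤ c) : eD1 μ₀ (Sfun c) Set.univ ≤ 2 := by
  refine le_trans (eD1_le μ₀ (isWUG_of_forall μ₀ ?_ (Sfun_ug hc))) ?_
  · exact measurable_const.indicator Tset_meas
  · rw [Measure.restrict_univ, int_gfun hc]

lemma totVar_le2 : totVar μ₀ u₀ Set.univ ≤ 2 := by
  have hc : ∀ i : ℕ, (1:ℝ) ≤ (i:ℝ)+1 := fun i => le_add_of_nonneg_left (Nat.cast_nonneg i)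
  rw [totVar]
  refine le_trans (iInf₂_le (fun i : ℕ => Sfun ((i:ℝ)+1)) ?_) ?_
  · exact ⟨fun i => Sfun_memloc (hc i), Sfun_tendsto⟩
  refine le_trans (Filter.liminf_le_liminf (Filter.Eventually.of_forall
    fun i => Sfun_eD1_le (hc i))) ?_
  rw [Filter.liminf_const]

/-! #### The upper approximate limit of `u₀` -/

lemma μ₀_ball_pos {x r : ℝ} (hr : 0 < r) : μ₀ (ball x r) ≠ 0 := by
  intro h
  have hle := le_μ₀ (s := ball x r) measurableSet_ball
  rw [h, Real.volume_ball, nonpos_iff_eq_zero, ENNReal.ofReal_eq_zero] at hle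
  linarith

lemma μ₀_ball_ne_top {x r : ℝ} : μ₀ (ball x r) ≠ ∞ := by
  refine (lt_of_le_of_lt (μ₀_le measurableSet_ball) ?_).ne
  rw [Real.volume_ball]
  exact ENNReal.mul_lt_top (by norm_num) ENNReal.ofReal_lt_top

lemma uVee_ge (x : ℝ) : (u₀ x : EReal) ≤ uVee μ₀ u₀ x := by
  rw [uVee]
  refine le_sInf ?_
  rintro _ ⟨t, ht, rfl⟩
  rw [Set.mem_setOf_eq] at ht
  rw [EReal.coe_le_coe_iff]
  by_contra hlt
  push_neg at hlt
  rcases lt_or_ge t 0 with ht0 | ht0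
  · have hset : {y : ℝ | t < u₀ y} = Set.univ := Set.eq_univ_of_forall fun y =>
      lt_of_lt_of_le ht0 (Set.indicator_nonneg (fun _ _ => zero_le_one) y)
    rw [hset] at ht
    have h1 : ∀ᶠ r in nhdsWithin (0:ℝ) (Set.Ioi 0),
        μ₀ (ball x r ∩ Set.univ) / μ₀ (ball x r) = 1 := by
      filter_upwards [self_mem_nhdsWithin] with r hr
      rw [Set.inter_univ]
      exact ENNReal.div_self (μ₀_ball_pos hr) μ₀_ball_ne_top
    exact one_ne_zero (tendsto_const_nhds_iff.1 (ht.congr' h1))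
  · have hx : x ∈ Set.Icc (-1:ℝ) 1 := by
      by_contra hx
      rw [u₀, Set.indicator_of_notMem hx] at hlt
      linarith
    have hux : u₀ x = 1 := Set.indicator_of_mem hx _
    rw [hux] at hlt
    have hset : {y : ℝ | t < u₀ y} = Set.Icc (-1:ℝ) 1 := by
      ext y
      simp only [Set.mem_setOf_eq]
      constructor
      · intro h
        by_contra hy
        rw [u₀, Set.indicator_of_notMem hy] at h
        linarith
      · intro hy
        rw [u₀, Set.indicator_of_mem hy]
        exact hlt
    rw [hset] at ht
    have hlb : ∀ r : ℝ, r ∈ Set.Ioc (0:ℝ) 1 →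
        ENNReal.ofReal (1/4) ≤ μ₀ (ball x r ∩ Set.Icc (-1) 1) / μ₀ (ball x r) := by
      intro r hr
      obtain ⟨hr0, hr1⟩ := hr
      have hnum : ENNReal.ofReal r ≤ μ₀ (ball x r ∩ Set.Icc (-1) 1) := by
        rcases le_total x 0 with hx0 | hx0
        · have hsub : Set.Ico x (x + r) ⊆ ball x r ∩ Set.Icc (-1) 1 := by
            rintro y ⟨hy1, hy2⟩
            refine ⟨?_, ?_, ?_⟩
            · rw [mem_ball, Real.dist_eq, abs_lt]
              constructor <;> linarith
            · linarith [hx.1]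
            · linarith
          calc ENNReal.ofReal r = volume (Set.Ico x (x+r)) := by
                rw [Real.volume_Ico]
                congr 1
                ring
          _ ≤ volume (ball x r ∩ Set.Icc (-1) 1) := measure_mono hsub
          _ ≤ μ₀ _ := le_μ₀ (measurableSet_ball.inter measurableSet_Icc)
        · have hsub : Set.Ioc (x - r) x ⊆ ball x r ∩ Set.Icc (-1) 1 := by
            rintro y ⟨hy1, hy2⟩
            refine ⟨?_, ?_, ?_⟩
            · rw [mem_ball, Real.dist_eq, abs_lt]
              constructor <;> linarith
            · linarith
            · linarith [hx.2]
          calc ENNReal.ofReal r = volume (Set.Ioc (x-r) x) := by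
                rw [Real.volume_Ioc]
                congr 1
                ring
          _ ≤ volume (ball x r ∩ Set.Icc (-1) 1) := measure_mono hsub
          _ ≤ μ₀ _ := le_μ₀ (measurableSet_ball.inter measurableSet_Icc)
      have hden : μ₀ (ball x r) ≤ ENNReal.ofReal (4*r) := by
        calc μ₀ (ball x r) ≤ 2 * volume (ball x r) := μ₀_le measurableSet_ball
        _ = 2 * ENNReal.ofReal (2*r) := by rw [Real.volume_ball]
        _ = ENNReal.ofReal (4*r) := by
            rw [show (2:ℝ≥0∞) = ENNReal.ofReal 2 by norm_num,
              ← ENNReal.ofReal_mul (by norm_num)]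
            ring_nf
      calc ENNReal.ofReal (1/4) = ENNReal.ofReal r / ENNReal.ofReal (4*r) := by
            rw [← ENNReal.ofReal_div_of_pos (by linarith)]
            congr 1
            field_simp
      _ ≤ _ := ENNReal.div_le_div hnum hden
    have hev1 : ∀ᶠ r in nhdsWithin (0:ℝ) (Set.Ioi 0),
        ENNReal.ofReal (1/4) ≤ μ₀ (ball x r ∩ Set.Icc (-1) 1) / μ₀ (ball x r) := by
      filter_upwards [Ioc_mem_nhdsGT_of_mem (Set.mem_Ico.2 ⟨le_refl (0:ℝ), one_pos⟩)]
        with r hr using hlb r hr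
    have hev2 : ∀ᶠ r in nhdsWithin (0:ℝ) (Set.Ioi 0),
        μ₀ (ball x r ∩ Set.Icc (-1) 1) / μ₀ (ball x r) < ENNReal.ofReal (1/4) :=
      ht.eventually_lt_const (ENNReal.ofReal_pos.2 (by norm_num))
    obtain ⟨r, hge, hltr⟩ := (hev1.and hev2).exists
    exact absurd hge (not_le.2 hltr)

end Example19

/-- Example: the constant applied to the jump part is necessary. -/
theorem weighted_line_example :
    ∀ μ : Measure ℝ, μ = (volume : Measure ℝ).withDensity
        (fun x => if x ∈ Set.Icc (-1:ℝ) 1 then 1 else 2) →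
    ∀ u : ℝ → ℝ, u = Set.indicator (Set.Icc (-1:ℝ) 1) (fun _ => (1:ℝ)) →
    ((∀ v : ℝ → ℝ, MemN11 μ v Set.univ → (∀ x, u x ≤ v x) →
        (∀ g : ℝ → ℝ≥0∞, IsUpperGradient v g → (4:ℝ≥0∞) ≤ ∫⁻ x, g x ∂μ) ∧
        (4:ℝ≥0∞) ≤ eD1 μ v Set.univ) ∧
      totVar μ u Set.univ ≤ 2 ∧
      ¬ ∃ w : ℕ → ℝ → ℝ, (∀ i, MemN11 μ (w i) Set.univ) ∧
          (∀ i x, uVee μ u x ≤ ((w i x : ℝ) : EReal)) ∧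
          Filter.atTop.limsup (fun i => eD1 μ (w i) Set.univ)
            < totVar μ u Set.univ
              + totVarOn μ u (jumpSet μ u Set.univ) Set.univ) := by
  intro μ hμ u hu
  have hμ0 : μ = μ₀ := hμ
  have hu0 : u = u₀ := hu
  subst hμ0 hu0
  refine ⟨fun v hN hvu => partA hN hvu, totVar_le2, ?_⟩
  rintro ⟨w, hw1, hw2, hw3⟩
  have hwu : ∀ i x, u₀ x ≤ w i x := fun i x =>
    EReal.coe_le_coe_iff.1 ((uVee_ge x).trans (hw2 i x))
  have h4 : ∀ i, (4:ℝ≥0∞) ≤ eD1 μ₀ (w i) Set.univ := fun i => (partA (hw1 i) (hwu i)).2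
  have hub : totVar μ₀ u₀ Set.univ + totVarOn μ₀ u₀ (jumpSet μ₀ u₀ Set.univ) Set.univ
      ≤ 4 := by
    have h2 : totVarOn μ₀ u₀ (jumpSet μ₀ u₀ Set.univ) Set.univ ≤ totVar μ₀ u₀ Set.univ := by
      rw [totVarOn]
      exact iInf₂_le Set.univ ⟨isOpen_univ, Set.subset_univ _, le_rfl⟩
    calc totVar μ₀ u₀ Set.univ + totVarOn μ₀ u₀ (jumpSet μ₀ u₀ Set.univ) Set.univ
        ≤ (2:ℝ≥0∞) + 2 := add_le_add totVar_le2 (h2.trans totVar_le2)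
    _ = 4 := by norm_num
  have hls : (4:ℝ≥0∞) ≤ Filter.atTop.limsup fun i => eD1 μ₀ (w i) Set.univ :=
    Filter.le_limsup_of_frequently_le (Filter.Frequently.of_forall h4)
  exact absurd (lt_of_lt_of_le hw3 hub) (not_lt.2 hls)

end Lahti
end
end
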